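/- arXiv:math/0703766 — 9 statements merged into one kernel-verified Lean document; each statement's English description precedes it below -/
import Mathlib

section
/- Let X be a metric space and n a natural number. The following conditions are equivalent: (1) for every uniformly bounded cover 𝒱 of X there is a uniformly bounded cover 𝒰 of X of multiplicity at most n+1 such that 𝒱 refines 𝒰; (2) for every r > 0 there exist r-disjoint uniformly bounded families 𝒰⁰, …, 𝒰ⁿ of subsets of X whose union covers X; (3) for every d > 0 there exists a uniformly bounded cover 𝒱 of X with d-multiplicity at most n+1; (4) for every λ > 0 there is a uniformly bounded cover 𝒲 of X with Lebesgue number greater than λ and multiplicity at most n+1. -/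
/-- `U` has diameter at most `D`. -/
def DiamLE {X : Type*} [MetricSpace X] (D : ℝ) (U : Set X) : Prop :=
  ∀ x ∈ U, ∀ y ∈ U, dist x y ≤ D

/-- `𝒰` is a cover of `X`. -/
def IsCover {X : Type*} [MetricSpace X] (𝒰 : Set (Set X)) : Prop :=
  ∀ x : X, ∃ U ∈ 𝒰, x ∈ U

/-- `𝒰` is uniformly bounded: there is a common bound on the diameters of its members. -/
def UniformlyBounded {X : Type*} [MetricSpace X] (𝒰 : Set (Set X)) : Prop :=
  ∃ D : ℝ, ∀ U ∈ 𝒰, DiamLE D U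

/-- `𝒱` refines `𝒰`: every member of `𝒱` is contained in some member of `𝒰`. -/
def Refines {X : Type*} [MetricSpace X] (𝒱 𝒰 : Set (Set X)) : Prop :=
  ∀ V ∈ 𝒱, ∃ U ∈ 𝒰, V ⊆ U

/-- The multiplicity of `𝒰` is at most `m`: every point lies in at most `m` members. -/
def MultLE {X : Type*} [MetricSpace X] (𝒰 : Set (Set X)) (m : ℕ) : Prop :=
  ∀ x : X, ({U ∈ 𝒰 | x ∈ U}).encard ≤ (m : ℕ∞)

/-- The `d`-multiplicity of `𝒰` is at most `m`: every ball of radius `d` meets at most `m`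
members. -/
def MultAtScaleLE {X : Type*} [MetricSpace X] (d : ℝ) (𝒰 : Set (Set X)) (m : ℕ) : Prop :=
  ∀ x : X, ({U ∈ 𝒰 | (U ∩ Metric.ball x d).Nonempty}).encard ≤ (m : ℕ∞)

/-- `𝒰` is `r`-disjoint: distinct members are at distance greater than `r`. -/
def RDisjoint {X : Type*} [MetricSpace X] (r : ℝ) (𝒰 : Set (Set X)) : Prop :=
  ∀ U ∈ 𝒰, ∀ V ∈ 𝒰, U ≠ V → ∀ x ∈ U, ∀ y ∈ V, r < dist x y

/-- The Lebesgue number of `𝒰` is greater than `lam`: for some `μ > lam`, every set of diameter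
at most `μ` is contained in some member of `𝒰`. -/
def LebesgueGT {X : Type*} [MetricSpace X] (lam : ℝ) (𝒰 : Set (Set X)) : Prop :=
  ∃ μ : ℝ, lam < μ ∧ ∀ A : Set X, DiamLE μ A → ∃ U ∈ 𝒰, A ⊆ U

private lemma mem_of_infEdist_pos' {X : Type*} [MetricSpace X] {x : X} {W : Set X}
    (h : 0 < EMetric.infEdist x Wᶜ) : x ∈ W := by
  by_contra hx
  rw [show EMetric.infEdist x Wᶜ = 0 from EMetric.infEdist_zero_of_mem (Set.mem_compl hx)] at h
  exact lt_irrefl _ h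

-- implication 1 → 4
private lemma imp14 {X : Type*} [MetricSpace X] (n : ℕ)
    (h1 : ∀ 𝒱 : Set (Set X), IsCover 𝒱 → UniformlyBounded 𝒱 →
      ∃ 𝒰 : Set (Set X), IsCover 𝒰 ∧ UniformlyBounded 𝒰 ∧ MultLE 𝒰 (n + 1) ∧ Refines 𝒱 𝒰) :
    ∀ lam : ℝ, 0 < lam → ∃ 𝒲 : Set (Set X), IsCover 𝒲 ∧ UniformlyBounded 𝒲 ∧
      LebesgueGT lam 𝒲 ∧ MultLE 𝒲 (n + 1) := by
  intro lam hlam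
  obtain ⟨𝒰, hUc, ⟨D, hD⟩, hmult, href⟩ := h1 (Set.range fun x => Metric.ball x (lam + 2))
    (fun x => ⟨Metric.ball x (lam + 2), ⟨x, rfl⟩, Metric.mem_ball_self (by linarith)⟩)
    ⟨2 * (lam + 2), by
      rintro U ⟨c, rfl⟩ p hp q hq
      have hp' := Metric.mem_ball.mp hp
      have hq' := Metric.mem_ball.mp hq
      have h1 := dist_triangle p c q
      have h2 : dist c q = dist q c := dist_comm c q
      linarith⟩
  refine ⟨insert ∅ 𝒰, fun x => ?_, ⟨D, ?_⟩, ⟨lam + 1, by linarith, ?_⟩, fun x => ?_⟩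
  · obtain ⟨U, hU, hx⟩ := hUc x
    exact ⟨U, Set.mem_insert_of_mem _ hU, hx⟩
  · rintro U (rfl | hU)
    · intro p hp; exact absurd hp (Set.notMem_empty p)
    · exact hD U hU
  · intro A hA
    rcases A.eq_empty_or_nonempty with rfl | ⟨a, ha⟩
    · exact ⟨∅, Set.mem_insert _ _, Set.empty_subset _⟩
    · have hsub : A ⊆ Metric.ball a (lam + 2) := fun y hy =>
        Metric.mem_ball.mpr (by have := hA y hy a ha; linarith)
      obtain ⟨U, hU, hUsub⟩ := href _ ⟨a, rfl⟩
      exact ⟨U, Set.mem_insert_of_mem _ hU, hsub.trans hUsub⟩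
  · refine le_trans (Set.encard_le_encard ?_) (hmult x)
    rintro U ⟨(rfl | hU), hx⟩
    · exact absurd hx (Set.notMem_empty x)
    · exact ⟨hU, hx⟩

-- implication 4 → 1
private lemma imp41 {X : Type*} [MetricSpace X] (n : ℕ)
    (h4 : ∀ lam : ℝ, 0 < lam → ∃ 𝒲 : Set (Set X), IsCover 𝒲 ∧ UniformlyBounded 𝒲 ∧
      LebesgueGT lam 𝒲 ∧ MultLE 𝒲 (n + 1)) :
    ∀ 𝒱 : Set (Set X), IsCover 𝒱 → UniformlyBounded 𝒱 →
      ∃ 𝒰 : Set (Set X), IsCover 𝒰 ∧ UniformlyBounded 𝒰 ∧ MultLE 𝒰 (n + 1) ∧ Refines 𝒱 𝒰 := by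
  intro 𝒱 hVc hVb
  obtain ⟨D, hD⟩ := hVb
  obtain ⟨𝒲, hWc, hWb, ⟨μ, hμ, hLeb⟩, hmult⟩ := h4 (|D| + 1) (by positivity)
  refine ⟨𝒲, hWc, hWb, hmult, fun V hV => hLeb V (fun p hp q hq => ?_)⟩
  have h1 := hD V hV p hp q hq
  have h2 := le_abs_self D
  linarith

-- implication 2 → 3
private lemma imp23 {X : Type*} [MetricSpace X] (n : ℕ)
    (h2 : ∀ r : ℝ, 0 < r → ∃ (𝒰 : Fin (n + 1) → Set (Set X)) (D : ℝ),
      (∀ x : X, ∃ i, ∃ U ∈ 𝒰 i, x ∈ U) ∧ (∀ i, RDisjoint r (𝒰 i)) ∧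
      (∀ i, ∀ U ∈ 𝒰 i, DiamLE D U)) :
    ∀ d : ℝ, 0 < d → ∃ 𝒱 : Set (Set X), IsCover 𝒱 ∧ UniformlyBounded 𝒱 ∧
      MultAtScaleLE d 𝒱 (n + 1) := by
  classical
  intro d hd
  obtain ⟨𝒰, D, hcov, hdisj, hD⟩ := h2 (2 * d) (by linarith)
  refine ⟨⋃ i, 𝒰 i, ?_, ⟨D, ?_⟩, ?_⟩
  · intro x
    obtain ⟨i, U, hU, hx⟩ := hcov x
    exact ⟨U, Set.mem_iUnion.mpr ⟨i, hU⟩, hx⟩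
  · intro U hU
    obtain ⟨i, hUi⟩ := Set.mem_iUnion.mp hU
    exact hD i U hUi
  · intro x
    set s := {U ∈ ⋃ i, 𝒰 i | (U ∩ Metric.ball x d).Nonempty} with hs
    have key : ∀ (i : Fin (n+1)), ∀ U ∈ s, ∀ V ∈ s, U ∈ 𝒰 i → V ∈ 𝒰 i → U = V := by
      intro i U hU V hV hUi hVi
      by_contra hne
      obtain ⟨u, hu, hub⟩ := hU.2
      obtain ⟨v, hv, hvb⟩ := hV.2
      have h1 := hdisj i U hUi V hVi hne u hu v hv
      have h2 := dist_triangle u x v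
      rw [Metric.mem_ball] at hub hvb
      have h3 : dist x v = dist v x := dist_comm x v
      linarith
    set g : Set X → Fin (n+1) := fun U => if h : ∃ i, U ∈ 𝒰 i then h.choose else 0 with hg
    have hinj : Set.InjOn g s := by
      intro U hU V hV hgeq
      have hU' : ∃ i, U ∈ 𝒰 i := Set.mem_iUnion.mp hU.1
      have hV' : ∃ i, V ∈ 𝒰 i := Set.mem_iUnion.mp hV.1
      rw [hg] at hgeq
      simp only [dif_pos hU', dif_pos hV'] at hgeq
      exact key hV'.choose U hU V hV (hgeq ▸ hU'.choose_spec) hV'.choose_spec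
    calc s.encard = (g '' s).encard := hinj.encard_image.symm
      _ ≤ (Set.univ : Set (Fin (n+1))).encard := Set.encard_le_encard (Set.subset_univ _)
      _ ≤ ((n + 1 : ℕ) : ℕ∞) := by
          rw [Set.encard_univ]
          simp

-- implication 3 → 4
private lemma imp34 {X : Type*} [MetricSpace X] (n : ℕ)
    (h3 : ∀ d : ℝ, 0 < d → ∃ 𝒱 : Set (Set X), IsCover 𝒱 ∧ UniformlyBounded 𝒱 ∧
      MultAtScaleLE d 𝒱 (n + 1)) :
    ∀ lam : ℝ, 0 < lam → ∃ 𝒲 : Set (Set X), IsCover 𝒲 ∧ UniformlyBounded 𝒲 ∧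
      LebesgueGT lam 𝒲 ∧ MultLE 𝒲 (n + 1) := by
  intro lam hlam
  obtain ⟨𝒱, hVc, ⟨D, hD⟩, hmult⟩ := h3 (lam + 1) (by linarith)
  set N : Set X → Set X := fun V => {y | ∃ v ∈ V, dist y v < lam + 1} with hN
  refine ⟨insert ∅ (N '' 𝒱), ?_, ⟨D + 2 * (lam + 1), ?_⟩, ⟨lam + 1/2, by linarith, ?_⟩, ?_⟩
  · intro x
    obtain ⟨V, hV, hx⟩ := hVc x
    exact ⟨N V, Set.mem_insert_of_mem _ ⟨V, hV, rfl⟩,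
      ⟨x, hx, by rw [dist_self]; linarith⟩⟩
  · rintro W (rfl | ⟨V, hV, rfl⟩)
    · intro p hp; exact absurd hp (Set.notMem_empty p)
    · rintro p ⟨vp, hvp, hdp⟩ q ⟨vq, hvq, hdq⟩
      have h1 := dist_triangle p vp vq
      have h2 := dist_triangle p vq q
      have h3 := hD V hV vp hvp vq hvq
      have h4 : dist vq q = dist q vq := dist_comm vq q
      calc dist p q ≤ dist p vq + dist vq q := dist_triangle p vq q
        _ ≤ (dist p vp + dist vp vq) + dist vq q := by linarith [dist_triangle p vp vq]
        _ ≤ D + 2 * (lam + 1) := by linarith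
  · intro A hA
    rcases A.eq_empty_or_nonempty with rfl | ⟨a, ha⟩
    · exact ⟨∅, Set.mem_insert _ _, Set.empty_subset _⟩
    · obtain ⟨V, hV, haV⟩ := hVc a
      refine ⟨N V, Set.mem_insert_of_mem _ ⟨V, hV, rfl⟩, fun y hy => ⟨a, haV, ?_⟩⟩
      have := hA y hy a ha
      linarith
  · intro x
    have hsub : {W ∈ insert ∅ (N '' 𝒱) | x ∈ W} ⊆
        N '' {V ∈ 𝒱 | (V ∩ Metric.ball x (lam + 1)).Nonempty} := by
      rintro W ⟨(rfl | ⟨V, hV, rfl⟩), hx⟩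
      · exact absurd hx (Set.notMem_empty x)
      · obtain ⟨v, hv, hdv⟩ := hx
        exact ⟨V, ⟨hV, ⟨v, hv, Metric.mem_ball.mpr (by rw [dist_comm]; exact hdv)⟩⟩, rfl⟩
    exact le_trans (Set.encard_le_encard hsub) (le_trans (Set.encard_image_le _ _) (hmult x))

private lemma imp42 {X : Type*} [MetricSpace X] (n : ℕ)
    (h4 : ∀ lam : ℝ, 0 < lam → ∃ 𝒲 : Set (Set X), IsCover 𝒲 ∧ UniformlyBounded 𝒲 ∧
      LebesgueGT lam 𝒲 ∧ MultLE 𝒲 (n + 1)) :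
    ∀ r : ℝ, 0 < r → ∃ (𝒰 : Fin (n + 1) → Set (Set X)) (D : ℝ),
      (∀ x : X, ∃ i, ∃ U ∈ 𝒰 i, x ∈ U) ∧ (∀ i, RDisjoint r (𝒰 i)) ∧
      (∀ i, ∀ U ∈ 𝒰 i, DiamLE D U) := by
  intro r hr
  obtain ⟨𝒲, hWc, ⟨D, hD⟩, ⟨μ, hμ, hLeb⟩, hmult⟩ := h4 ((4 * n + 6) * r) (by positivity)
  -- depth function and thresholds
  set f : X → Set X → ENNReal := fun x W => EMetric.infEdist x Wᶜ with hf
  set a : ℕ → ENNReal := fun i => ENNReal.ofReal ((2 * i + 2) * r) with ha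
  set b : ℕ → ENNReal := fun i => ENNReal.ofReal ((2 * i + 1) * r) with hb
  have hab : ∀ i : ℕ, b i + ENNReal.ofReal r = a i := by
    intro i
    rw [hb, ha, ← ENNReal.ofReal_add (by positivity) hr.le]
    congr 1
    ring
  have hba : ∀ i : ℕ, b i ≤ a i := by
    intro i
    exact ENNReal.ofReal_le_ofReal (by nlinarith [hr.le, (Nat.cast_nonneg i : (0:ℝ) ≤ i)])
  have hapos : ∀ i : ℕ, 0 < a i := fun i =>
    ENNReal.ofReal_pos.mpr (by positivity)
  set U : ℕ → Set (Set X) → Set X := fun i σ =>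
    {x | (∀ W ∈ σ, a i < f x W) ∧ ∀ W ∈ 𝒲, W ∉ σ → f x W ≤ b i} with hU
  refine ⟨fun i => {V | ∃ σ : Set (Set X), σ ⊆ 𝒲 ∧ σ.Nonempty ∧ V = U i.1 σ}, D, ?_, ?_, ?_⟩
  · -- cover
    intro x
    -- a member deep around x
    have hball : DiamLE μ (Metric.closedBall x (μ / 2)) := by
      intro p hp q hq
      rw [Metric.mem_closedBall] at hp hq
      have h1 := dist_triangle p x q
      have h2 : dist x q = dist q x := dist_comm x q
      linarith
    obtain ⟨W₀, hW₀, hsub⟩ := hLeb _ hball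
    have hrn : (0:ℝ) < μ / 2 := by
      have : (0:ℝ) ≤ (4 * n + 6) * r := by positivity
      linarith
    have hdeep : a n < f x W₀ := by
      have h1 : ENNReal.ofReal (μ / 2) ≤ f x W₀ := by
        rw [hf]
        refine le_trans (le_refl _) (EMetric.le_infEdist.mpr fun y hy => ?_)
        have hy' : ¬ dist y x ≤ μ / 2 := fun h => hy (hsub (Metric.mem_closedBall.mpr h))
        rw [edist_dist]
        refine ENNReal.ofReal_le_ofReal ?_
        rw [dist_comm]
        linarith [not_le.mp hy']
      refine lt_of_lt_of_le ?_ h1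
      rw [ha]
      refine (ENNReal.ofReal_lt_ofReal_iff hrn).mpr ?_
      have hcast : ((4:ℝ) * n + 6) * r < μ := hμ
      nlinarith [(Nat.cast_nonneg n : (0:ℝ) ≤ n), hr]
    -- the chains of sets
    set S : ℕ → Set (Set X) := fun i => {W ∈ 𝒲 | a i < f x W} with hS
    set T : ℕ → Set (Set X) := fun i => {W ∈ 𝒲 | b i < f x W} with hT
    have hST : ∀ i, S i ⊆ T i := fun i W hW => ⟨hW.1, lt_of_le_of_lt (hba i) hW.2⟩
    have hTS : ∀ i, T (i + 1) ⊆ S i := by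
      intro i W hW
      refine ⟨hW.1, lt_of_le_of_lt ?_ hW.2⟩
      rw [ha, hb]
      refine ENNReal.ofReal_le_ofReal ?_
      push_cast
      nlinarith [hr.le, (Nat.cast_nonneg i : (0:ℝ) ≤ i)]
    have hC : ({W ∈ 𝒲 | x ∈ W}).encard ≤ ((n + 1 : ℕ) : ℕ∞) := hmult x
    have hCfin : ({W ∈ 𝒲 | x ∈ W}).Finite := Set.finite_of_encard_le_coe hC
    have hTC : ∀ i, T i ⊆ {W ∈ 𝒲 | x ∈ W} := by
      intro i W hW
      refine ⟨hW.1, mem_of_infEdist_pos' ?_⟩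
      exact lt_of_le_of_lt zero_le hW.2
    have hTfin : ∀ i, (T i).Finite := fun i => hCfin.subset (hTC i)
    have hSfin : ∀ i, (S i).Finite := fun i => (hTfin i).subset (hST i)
    have hCcard : ({W ∈ 𝒲 | x ∈ W}).ncard ≤ n + 1 := by
      rw [← Nat.cast_le (α := ℕ∞), hCfin.cast_ncard_eq]
      exact_mod_cast hC
    have hW₀S : ∀ i ≤ n, W₀ ∈ S i := by
      intro i hi
      refine ⟨hW₀, lt_of_le_of_lt ?_ hdeep⟩
      rw [ha]
      refine ENNReal.ofReal_le_ofReal ?_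
      have : (i:ℝ) ≤ n := Nat.cast_le.mpr hi
      nlinarith [hr.le]
    -- pigeonhole: some level is clean
    have hex : ∃ i ≤ n, S i = T i := by
      by_contra hcon
      push_neg at hcon
      have hlt : ∀ i ≤ n, (S i).ncard < (T i).ncard := fun i hi =>
        Set.ncard_lt_ncard (ssubset_of_subset_of_ne (hST i) (hcon i hi)) (hTfin i)
      have hmain : ∀ i, i ≤ n → (S i).ncard + i < n + 1 := by
        intro i
        induction i with
        | zero =>
          intro _
          have h1 := hlt 0 (Nat.zero_le n)
          have h2 : (T 0).ncard ≤ n + 1 := le_trans (Set.ncard_le_ncard (hTC 0) hCfin) hCcard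
          omega
        | succ i ih =>
          intro hi
          have h1 := hlt (i + 1) hi
          have h2 : (T (i + 1)).ncard ≤ (S i).ncard :=
            Set.ncard_le_ncard (hTS i) (hSfin i)
          have h3 := ih (Nat.le_of_succ_le hi)
          omega
      have h4 := hmain n le_rfl
      have h5 : 0 < (S n).ncard := (Set.ncard_pos (hSfin n)).mpr ⟨W₀, hW₀S n le_rfl⟩
      omega
    obtain ⟨i, hin, hSiTi⟩ := hex
    refine ⟨⟨i, by omega⟩, U i (S i), ⟨S i, fun W hW => hW.1, ⟨W₀, hW₀S i hin⟩, rfl⟩,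
      fun W hW => hW.2, fun W hWmem hWnot => ?_⟩
    by_contra hcon
    push_neg at hcon
    exact hWnot (hSiTi ▸ (⟨hWmem, hcon⟩ : W ∈ T i))
  · -- r-disjointness
    intro i
    rintro V ⟨σ, hσW, hσne, rfl⟩ V' ⟨τ, hτW, hτne, rfl⟩ hne p hp q hq
    have hστ : σ ≠ τ := fun h => hne (by rw [h])
    have key : ∀ σ' τ' : Set (Set X), ∀ W, W ∈ 𝒲 → W ∈ σ' → W ∉ τ' →
        ∀ p ∈ U i.1 σ', ∀ q ∈ U i.1 τ', r < dist p q := by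
      intro σ' τ' W hWmem hWσ hWτ p hp q hq
      have h1 : a i.1 < f p W := hp.1 W hWσ
      have h2 : f q W ≤ b i.1 := hq.2 W hWmem hWτ
      by_contra hle
      push_neg at hle
      have h3 : f p W ≤ f q W + edist p q := EMetric.infEdist_le_infEdist_add_edist
      have hed : edist p q ≤ ENNReal.ofReal r := by
        rw [edist_dist]
        exact ENNReal.ofReal_le_ofReal hle
      have h4 : f p W ≤ b i.1 + ENNReal.ofReal r :=
        le_trans h3 (add_le_add h2 hed)
      rw [hab i.1] at h4
      exact absurd h1 (not_lt.mpr h4)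
    rcases (by
      by_contra h
      push_neg at h
      exact hστ (Set.Subset.antisymm h.1 h.2) :
      (∃ W ∈ σ, W ∉ τ) ∨ (∃ W ∈ τ, W ∉ σ)) with ⟨W, hWσ, hWτ⟩ | ⟨W, hWτ, hWσ⟩
    · exact key σ τ W (hσW hWσ) hWσ hWτ p hp q hq
    · rw [dist_comm]
      exact key τ σ W (hτW hWτ) hWτ hWσ q hq p hp
  · -- boundedness
    rintro i V ⟨σ, hσW, ⟨W₁, hW₁⟩, rfl⟩ p hp q hq
    have hpW : p ∈ W₁ := mem_of_infEdist_pos' (lt_trans (hapos i.1) (hp.1 W₁ hW₁))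
    have hqW : q ∈ W₁ := mem_of_infEdist_pos' (lt_trans (hapos i.1) (hq.1 W₁ hW₁))
    exact hD W₁ (hσW hW₁) p hpW q hqW


/-- The four standard characterizations of `asdim X ≤ n` are equivalent. -/
theorem asdim_tfae {X : Type*} [MetricSpace X] (n : ℕ) :
    List.TFAE
      [ ∀ 𝒱 : Set (Set X), IsCover 𝒱 → UniformlyBounded 𝒱 →
          ∃ 𝒰 : Set (Set X), IsCover 𝒰 ∧ UniformlyBounded 𝒰 ∧ MultLE 𝒰 (n + 1) ∧ Refines 𝒱 𝒰,
        ∀ r : ℝ, 0 < r → ∃ (𝒰 : Fin (n + 1) → Set (Set X)) (D : ℝ),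
          (∀ x : X, ∃ i, ∃ U ∈ 𝒰 i, x ∈ U) ∧ (∀ i, RDisjoint r (𝒰 i)) ∧
          (∀ i, ∀ U ∈ 𝒰 i, DiamLE D U),
        ∀ d : ℝ, 0 < d → ∃ 𝒱 : Set (Set X), IsCover 𝒱 ∧ UniformlyBounded 𝒱 ∧
          MultAtScaleLE d 𝒱 (n + 1),
        ∀ lam : ℝ, 0 < lam → ∃ 𝒲 : Set (Set X), IsCover 𝒲 ∧ UniformlyBounded 𝒲 ∧
          LebesgueGT lam 𝒲 ∧ MultLE 𝒲 (n + 1) ] := by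
  tfae_have 1 → 4 := imp14 n
  tfae_have 4 → 1 := imp41 n
  tfae_have 2 → 3 := imp23 n
  tfae_have 3 → 4 := imp34 n
  tfae_have 4 → 2 := imp42 n
  tfae_finish
end

section
/- Let G be a simple graph on a vertex set V that is a tree (connected and acyclic), and equip V with the graph metric d(u,v) given by the length of a shortest path from u to v in G. Then asdim(V,d) ≤ 1: for every r > 0 there exist two r-disjoint uniformly bounded families of subsets of V whose union covers V. -/
open SimpleGraph Walk

namespace TreeAsdimAux

variable {V : Type*} {G : SimpleGraph V}

lemma dist_add_dist_of_mem_support (hconn : G.Connected) {u v w : V}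
    (p : G.Walk u v) (hp : p.length = G.dist u v) (hw : w ∈ p.support) :
    G.dist u w + G.dist w v = G.dist u v := by
  classical
  refine le_antisymm ?_ hconn.dist_triangle
  calc G.dist u w + G.dist w v
      ≤ (p.takeUntil w hw).length + (p.dropUntil w hw).length :=
        Nat.add_le_add (dist_le _) (dist_le _)
    _ = p.length := by rw [← Walk.length_append, Walk.take_spec]
    _ = G.dist u v := hp

lemma exists_shortest_path {u v : V} (hr : G.Reachable u v) :
    ∃ p : G.Walk u v, p.IsPath ∧ p.length = G.dist u v := by
  classical
  obtain ⟨p, hp⟩ := hr.exists_walk_length_eq_dist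
  exact ⟨p.bypass, p.bypass_isPath, le_antisymm (hp ▸ p.length_bypass_le) (dist_le _)⟩

lemma dist_le_one_of_adj {u v : V} (h : G.Adj u v) : G.dist u v ≤ 1 := by
  simpa using dist_le h.toWalk

lemma exists_parent (hconn : G.Connected) {x₀ v : V} (h : 0 < G.dist x₀ v) :
    ∃ u, G.Adj u v ∧ G.dist x₀ u + 1 = G.dist x₀ v := by
  obtain ⟨p, hp⟩ := (hconn x₀ v).exists_walk_length_eq_dist
  have hne : v ≠ x₀ := by
    rintro rfl
    simp [SimpleGraph.dist_self] at h
  obtain ⟨u, hadj, q, hq⟩ := Walk.exists_eq_cons_of_ne hne p.reverse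
  have hlen : p.length = q.length + 1 := by
    have h1 := congrArg Walk.length hq
    simpa using h1
  have h1 : G.dist x₀ u ≤ q.length := by
    simpa using dist_le q.reverse
  have h2 : G.dist x₀ v ≤ G.dist x₀ u + 1 :=
    hconn.dist_triangle.trans (Nat.add_le_add_left (dist_le_one_of_adj hadj.symm) _)
  exact ⟨u, hadj.symm, by omega⟩

lemma parent_unique (hconn : G.Connected) (hacyc : G.IsAcyclic) {x₀ v u₁ u₂ : V}
    (h₁ : G.Adj u₁ v) (hd₁ : G.dist x₀ u₁ + 1 = G.dist x₀ v)
    (h₂ : G.Adj u₂ v) (hd₂ : G.dist x₀ u₂ + 1 = G.dist x₀ v) : u₁ = u₂ := by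
  classical
  obtain ⟨p₁, hp₁, hl₁⟩ := exists_shortest_path (hconn x₀ u₁)
  obtain ⟨p₂, hp₂, hl₂⟩ := exists_shortest_path (hconn x₀ u₂)
  have hv₁ : v ∉ p₁.support := by
    intro hv
    have := dist_add_dist_of_mem_support hconn p₁ hl₁ hv
    omega
  have hv₂ : v ∉ p₂.support := by
    intro hv
    have := dist_add_dist_of_mem_support hconn p₂ hl₂ hv
    omega
  have hc₁ : (p₁.concat h₁).IsPath := by
    rw [← Walk.isPath_reverse_iff, Walk.reverse_concat, Walk.cons_isPath_iff]
    exact ⟨hp₁.reverse, by simpa using hv₁⟩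
  have hc₂ : (p₂.concat h₂).IsPath := by
    rw [← Walk.isPath_reverse_iff, Walk.reverse_concat, Walk.cons_isPath_iff]
    exact ⟨hp₂.reverse, by simpa using hv₂⟩
  have hkey : (⟨p₁.concat h₁, hc₁⟩ : G.Path x₀ v) = ⟨p₂.concat h₂, hc₂⟩ :=
    hacyc.path_unique _ _
  have hw : p₁.concat h₁ = p₂.concat h₂ := congrArg Subtype.val hkey
  have h5 : (p₁.concat h₁).reverse.support = (p₂.concat h₂).reverse.support := by rw [hw]
  rw [Walk.reverse_concat, Walk.reverse_concat, Walk.support_cons, Walk.support_cons,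
    p₁.reverse.support_eq_cons, p₂.reverse.support_eq_cons] at h5
  simp only [List.cons.injEq] at h5
  exact h5.2.1

lemma adj_dist_cases (hconn : G.Connected) (hacyc : G.IsAcyclic) {x₀ u v : V}
    (h : G.Adj u v) :
    G.dist x₀ v = G.dist x₀ u + 1 ∨ G.dist x₀ u = G.dist x₀ v + 1 := by
  classical
  have hne : G.dist x₀ u ≠ G.dist x₀ v := by
    intro heq
    obtain ⟨p, hp, hl⟩ := exists_shortest_path (hconn x₀ u)
    have hv : v ∉ p.support := by
      intro hv
      have h1 := dist_add_dist_of_mem_support hconn p hl hv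
      have h2 : G.dist v u ≠ 0 := by
        intro h0
        exact h.ne' ((hconn v u).dist_eq_zero_iff.mp h0)
      omega
    have hc : (p.concat h).IsPath := by
      rw [← Walk.isPath_reverse_iff, Walk.reverse_concat, Walk.cons_isPath_iff]
      exact ⟨hp.reverse, by simpa using hv⟩
    obtain ⟨q, hq, hlq⟩ := exists_shortest_path (hconn x₀ v)
    have hkey : (⟨p.concat h, hc⟩ : G.Path x₀ v) = ⟨q, hq⟩ := hacyc.path_unique _ _
    have hw : p.concat h = q := congrArg Subtype.val hkey
    have := congrArg Walk.length hw
    rw [Walk.length_concat] at this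
    omega
  have h1 : G.dist x₀ v ≤ G.dist x₀ u + 1 :=
    hconn.dist_triangle.trans (Nat.add_le_add_left (dist_le_one_of_adj h) _)
  have h2 : G.dist x₀ u ≤ G.dist x₀ v + 1 :=
    hconn.dist_triangle.trans (Nat.add_le_add_left (dist_le_one_of_adj h.symm) _)
  omega

noncomputable def par (G : SimpleGraph V) (x₀ v : V) : V :=
  letI := Classical.dec (∃ u, G.Adj u v ∧ G.dist x₀ u + 1 = G.dist x₀ v)
  if h : ∃ u, G.Adj u v ∧ G.dist x₀ u + 1 = G.dist x₀ v then h.choose else v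

lemma par_spec (hconn : G.Connected) {x₀ v : V} (h : 0 < G.dist x₀ v) :
    G.Adj (par G x₀ v) v ∧ G.dist x₀ (par G x₀ v) + 1 = G.dist x₀ v := by
  have he := exists_parent hconn h
  simp only [par]
  rw [dif_pos he]
  exact he.choose_spec

lemma par_eq (hconn : G.Connected) (hacyc : G.IsAcyclic) {x₀ u v : V}
    (hadj : G.Adj u v) (hd : G.dist x₀ u + 1 = G.dist x₀ v) : par G x₀ v = u := by
  have hs := par_spec hconn (x₀ := x₀) (v := v) (by omega)
  exact parent_unique hconn hacyc hs.1 hs.2 hadj hd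

lemma par_iter (hconn : G.Connected) {x₀ : V} (v : V) :
    ∀ j, j ≤ G.dist x₀ v →
      G.dist x₀ ((par G x₀)^[j] v) = G.dist x₀ v - j ∧
      G.dist ((par G x₀)^[j] v) v ≤ j := by
  intro j
  induction j with
  | zero => simp
  | succ j ih =>
    intro hj
    obtain ⟨h1, h2⟩ := ih (by omega)
    have hpos : 0 < G.dist x₀ ((par G x₀)^[j] v) := by omega
    obtain ⟨hadj, hd⟩ := par_spec hconn hpos
    rw [Function.iterate_succ_apply']
    constructor
    · omega
    · calc G.dist (par G x₀ ((par G x₀)^[j] v)) v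
          ≤ G.dist (par G x₀ ((par G x₀)^[j] v)) ((par G x₀)^[j] v)
            + G.dist ((par G x₀)^[j] v) v := hconn.dist_triangle
        _ ≤ 1 + j := Nat.add_le_add (dist_le_one_of_adj hadj) h2
        _ = j + 1 := by omega

noncomputable def anc (G : SimpleGraph V) (x₀ : V) (t : ℕ) (v : V) : V :=
  (par G x₀)^[G.dist x₀ v - t] v

lemma dist_anc (hconn : G.Connected) {x₀ : V} (t : ℕ) (v : V) :
    G.dist (anc G x₀ t v) v ≤ G.dist x₀ v - t :=
  (par_iter hconn v _ (Nat.sub_le _ _)).2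

lemma rho_anc (hconn : G.Connected) {x₀ : V} {t : ℕ} {v : V} (ht : t ≤ G.dist x₀ v) :
    G.dist x₀ (anc G x₀ t v) = t := by
  have := (par_iter hconn v _ (Nat.sub_le (G.dist x₀ v) t)).1
  rw [anc, this]
  omega

lemma anc_adj_step (hconn : G.Connected) (hacyc : G.IsAcyclic) {x₀ u v : V} {t : ℕ}
    (hadj : G.Adj u v) (hd : G.dist x₀ v = G.dist x₀ u + 1) (ht : t ≤ G.dist x₀ u) :
    anc G x₀ t v = anc G x₀ t u := by
  have h1 : G.dist x₀ v - t = (G.dist x₀ u - t) + 1 := by omega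
  rw [anc, h1, Function.iterate_succ_apply, par_eq hconn hacyc hadj hd.symm, anc]

lemma anc_walk (hconn : G.Connected) (hacyc : G.IsAcyclic) {x₀ : V} {t : ℕ} {u v : V}
    (p : G.Walk u v) (hs : ∀ w ∈ p.support, t ≤ G.dist x₀ w) :
    anc G x₀ t u = anc G x₀ t v := by
  induction p with
  | nil => rfl
  | @cons a b c h q ih =>
    have hta : t ≤ G.dist x₀ a := hs a (Walk.start_mem_support _)
    have htb : t ≤ G.dist x₀ b := hs b (by simp)
    have hab : anc G x₀ t a = anc G x₀ t b := by
      rcases adj_dist_cases hconn hacyc (x₀ := x₀) h with hc | hc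
      · exact (anc_adj_step hconn hacyc h hc hta).symm
      · exact anc_adj_step hconn hacyc h.symm hc htb
    rw [hab]
    exact ih fun w hw => hs w (by simp [hw])

lemma anc_eq_of_close (hconn : G.Connected) (hacyc : G.IsAcyclic) {x₀ u v : V} {t : ℕ}
    (htu : t ≤ G.dist x₀ u) (htv : t ≤ G.dist x₀ v)
    (h : G.dist u v + 2 * t ≤ G.dist x₀ u + G.dist x₀ v + 1) :
    anc G x₀ t u = anc G x₀ t v := by
  obtain ⟨p, hp⟩ := (hconn u v).exists_walk_length_eq_dist
  refine anc_walk hconn hacyc p fun w hw => ?_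
  have h1 := dist_add_dist_of_mem_support hconn p hp hw
  have h2 : G.dist x₀ u ≤ G.dist x₀ w + G.dist w u := hconn.dist_triangle
  have h3 : G.dist x₀ v ≤ G.dist x₀ w + G.dist w v := hconn.dist_triangle
  have h4 : G.dist w u = G.dist u w := dist_comm
  omega

lemma anc_zero (hconn : G.Connected) {x₀ : V} (v : V) : anc G x₀ 0 v = x₀ := by
  have := rho_anc hconn (x₀ := x₀) (t := 0) (v := v) (Nat.zero_le _)
  exact (hconn.dist_eq_zero_iff.mp this).symm

end TreeAsdimAux
/-- `𝒰` is `r`-disjoint with respect to the distance function `d`. -/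
def RDisjointD {α : Type*} (d : α → α → ℝ) (r : ℝ) (𝒰 : Set (Set α)) : Prop :=
  ∀ U ∈ 𝒰, ∀ V ∈ 𝒰, U ≠ V → ∀ x ∈ U, ∀ y ∈ V, r < d x y

/-- `U` has diameter at most `D` with respect to the distance function `d`. -/
def DiamLED {α : Type*} (d : α → α → ℝ) (D : ℝ) (U : Set α) : Prop :=
  ∀ x ∈ U, ∀ y ∈ U, d x y ≤ D

/-- Asymptotic dimension at most `n` with respect to the distance function `d` : for every
`r > 0` there are `n + 1` families of subsets, each `r`-disjoint, all uniformly bounded,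
whose union covers the space. -/
def AsdimLED {α : Type*} (d : α → α → ℝ) (n : ℕ) : Prop :=
  ∀ r : ℝ, 0 < r → ∃ (𝒰 : Fin (n + 1) → Set (Set α)) (D : ℝ),
    (∀ x : α, ∃ i, ∃ U ∈ 𝒰 i, x ∈ U) ∧
    (∀ i, RDisjointD d r (𝒰 i)) ∧
    (∀ i, ∀ U ∈ 𝒰 i, DiamLED d D U)

open TreeAsdimAux in
/-- A tree (connected acyclic simple graph), with the graph metric on its vertex set, has
asymptotic dimension at most 1. -/
theorem tree_asdim_le_one {V : Type*} (G : SimpleGraph V)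
    (hconn : G.Connected) (hacyc : G.IsAcyclic) :
    AsdimLED (fun u v : V => (G.dist u v : ℝ)) 1 := by
  intro r hr
  classical
  obtain ⟨x₀⟩ := hconn.nonempty
  set m : ℕ := ⌈r⌉₊ + 1 with hm
  have hm1 : 1 ≤ m := Nat.le_add_left 1 _
  have hrm : r < (m : ℝ) := by
    have h1 : r ≤ (⌈r⌉₊ : ℝ) := Nat.le_ceil r
    have h2 : ((⌈r⌉₊ : ℕ) : ℝ) < ((⌈r⌉₊ + 1 : ℕ) : ℝ) := by push_cast; linarith
    rw [hm]; linarith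
  set ρ : V → ℕ := fun v => G.dist x₀ v with hρ
  set t : ℕ → ℕ := fun k => if k = 0 then 0 else 2 * m * k - m with ht
  set P : ℕ → V → Set V := fun k a =>
    {v | 2 * m * k ≤ ρ v ∧ ρ v < 2 * m * (k + 1) ∧ anc G x₀ (t k) v = a} with hP
  have htle : ∀ (k : ℕ) (v : V), 2 * m * k ≤ ρ v → t k ≤ ρ v := by
    intro k v hv
    rcases Nat.eq_zero_or_pos k with rfl | hk
    · simp [ht]
    · have h1 : t k = 2 * m * k - m := by simp [ht, Nat.pos_iff_ne_zero.mp hk]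
      omega
  refine ⟨fun i => {S | ∃ k a, k % 2 = (i : ℕ) ∧ S = P k a}, ((6 * m : ℕ) : ℝ), ?_, ?_, ?_⟩
  · -- cover
    intro v
    set k : ℕ := ρ v / (2 * m) with hk
    have hdm : 2 * m * k + ρ v % (2 * m) = ρ v := by
      rw [hk]; exact Nat.div_add_mod _ _
    have hmod : ρ v % (2 * m) < 2 * m := Nat.mod_lt _ (by omega)
    have hB : 2 * m * (k + 1) = 2 * m * k + 2 * m := by ring
    refine ⟨⟨k % 2, Nat.mod_lt _ (by omega)⟩, P k (anc G x₀ (t k) v),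
      ⟨k, anc G x₀ (t k) v, rfl, rfl⟩, ?_, ?_, rfl⟩
    · omega
    · omega
  · -- r-disjoint
    intro i U hU W hW hne x hx y hy
    obtain ⟨k, a, hki, rfl⟩ := hU
    obtain ⟨k', a', hki', rfl⟩ := hW
    obtain ⟨hx1, hx2, hx3⟩ := hx
    obtain ⟨hy1, hy2, hy3⟩ := hy
    have key : m ≤ G.dist x y := by
      rcases Nat.lt_trichotomy k k' with hlt | heq | hgt
      · -- k' ≥ k + 2
        have hpar : k + 2 ≤ k' := by omega
        have h1 : 2 * m * (k + 2) ≤ 2 * m * k' := Nat.mul_le_mul_left _ hpar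
        have h2 : 2 * m * (k + 2) = 2 * m * (k + 1) + 2 * m := by ring
        have h3 : ρ y ≤ ρ x + G.dist x y := hconn.dist_triangle
        omega
      · subst heq
        have hane : a ≠ a' := by
          intro h; exact hne (h ▸ rfl)
        rcases Nat.eq_zero_or_pos k with rfl | hk
        · exfalso
          apply hane
          rw [← hx3, ← hy3]
          have h0 : t 0 = 0 := by simp [ht]
          rw [h0, anc_zero hconn, anc_zero hconn]
        · have h1 : t k = 2 * m * k - m := by simp [ht, Nat.pos_iff_ne_zero.mp hk]
          have h2 : 2 * m * 1 ≤ 2 * m * k := Nat.mul_le_mul_left _ hk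
          have h3 : 2 * m * 1 = 2 * m := by ring
          have htx : t k ≤ ρ x := htle k x hx1
          have hty : t k ≤ ρ y := htle k y hy1
          by_contra hcon
          have hclose : G.dist x y + 2 * t k ≤ ρ x + ρ y + 1 := by omega
          have := anc_eq_of_close hconn hacyc htx hty hclose
          exact hane (hx3 ▸ hy3 ▸ this ▸ rfl)
      · -- k ≥ k' + 2
        have hpar : k' + 2 ≤ k := by omega
        have h1 : 2 * m * (k' + 2) ≤ 2 * m * k := Nat.mul_le_mul_left _ hpar
        have h2 : 2 * m * (k' + 2) = 2 * m * (k' + 1) + 2 * m := by ring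
        have h3 : ρ x ≤ ρ y + G.dist y x := hconn.dist_triangle
        have h4 : G.dist y x = G.dist x y := SimpleGraph.dist_comm
        omega
    calc r < (m : ℝ) := hrm
      _ ≤ (G.dist x y : ℝ) := by exact_mod_cast key
  · -- diameter
    intro i U hU x hx y hy
    obtain ⟨k, a, hki, rfl⟩ := hU
    obtain ⟨hx1, hx2, hx3⟩ := hx
    obtain ⟨hy1, hy2, hy3⟩ := hy
    have htx : t k ≤ ρ x := htle k x hx1
    have hty : t k ≤ ρ y := htle k y hy1
    have hdx : G.dist (anc G x₀ (t k) x) x ≤ ρ x - t k := dist_anc hconn _ _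
    have hdy : G.dist (anc G x₀ (t k) y) y ≤ ρ y - t k := dist_anc hconn _ _
    have htri : G.dist x y ≤ G.dist x a + G.dist a y := hconn.dist_triangle
    have hcx : G.dist x a = G.dist (anc G x₀ (t k) x) x := by
      rw [← hx3]; exact SimpleGraph.dist_comm
    have hcy : G.dist a y = G.dist (anc G x₀ (t k) y) y := by rw [← hy3]
    have hbound : G.dist x y ≤ 6 * m := by
      rcases Nat.eq_zero_or_pos k with rfl | hk
      · have h0 : t 0 = 0 := by simp [ht]
        have hB : 2 * m * (0 + 1) = 2 * m := by ring
        omega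
      · have h1 : t k = 2 * m * k - m := by simp [ht, Nat.pos_iff_ne_zero.mp hk]
        have h2 : 2 * m * 1 ≤ 2 * m * k := Nat.mul_le_mul_left _ hk
        have h3 : 2 * m * 1 = 2 * m := by ring
        have hB : 2 * m * (k + 1) = 2 * m * k + 2 * m := by ring
        omega
    show (G.dist x y : ℝ) ≤ ((6 * m : ℕ) : ℝ)
    exact_mod_cast hbound
end

section
/- Let f : X → Y be a coarse equivalence between metric spaces, and let n be a natural number. Then asdim X ≤ n if and only if asdim Y ≤ n; in particular asdim X = asdim Y. -/
/-- `X` has asymptotic dimension at most `n`: for every `r > 0` there exist `n + 1` families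
of subsets of `X`, each `r`-disjoint, all uniformly bounded by a common bound `D`, whose
union covers `X`. -/
def AsdimLE (n : ℕ) (X : Type*) [MetricSpace X] : Prop :=
  ∀ r : ℝ, 0 < r → ∃ (𝒰 : Fin (n + 1) → Set (Set X)) (D : ℝ),
    (∀ x : X, ∃ i, ∃ U ∈ 𝒰 i, x ∈ U) ∧
    (∀ i, RDisjoint r (𝒰 i)) ∧
    (∀ i, ∀ U ∈ 𝒰 i, DiamLE D U)

/-- `f : X → Y` is a coarse equivalence: a coarse embedding whose image is coarsely dense. -/
def IsCoarseEquiv {X Y : Type*} [MetricSpace X] [MetricSpace Y] (f : X → Y) : Prop :=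
  ∃ ρ₁ ρ₂ : ℝ → ℝ, Monotone ρ₁ ∧ Monotone ρ₂ ∧
    Filter.Tendsto ρ₁ Filter.atTop Filter.atTop ∧
    (∀ x x' : X, ρ₁ (dist x x') ≤ dist (f x) (f x') ∧ dist (f x) (f x') ≤ ρ₂ (dist x x')) ∧
    ∃ R : ℝ, 0 ≤ R ∧ ∀ y : Y, ∃ x : X, dist y (f x) ≤ R

/-- Pullback lemma: if `g : Y → X` is "coarse" in both directions, asdim transfers. -/
lemma asdim_pullback {X Y : Type*} [MetricSpace X] [MetricSpace Y] (g : Y → X) (n : ℕ)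
    (h1 : ∀ r : ℝ, 0 < r → ∃ r' : ℝ, 0 < r' ∧
      ∀ y y' : Y, r' < dist (g y) (g y') → r < dist y y')
    (h2 : ∀ D : ℝ, ∃ D' : ℝ, ∀ y y' : Y, dist (g y) (g y') ≤ D → dist y y' ≤ D')
    (hX : AsdimLE n X) : AsdimLE n Y := by
  intro r hr
  obtain ⟨r', hr', hr'prop⟩ := h1 r hr
  obtain ⟨𝒰, D, hcov, hdisj, hdiam⟩ := hX r' hr'
  obtain ⟨D', hD'⟩ := h2 D
  refine ⟨fun i => (fun U => g ⁻¹' U) '' 𝒰 i, D', ?_, ?_, ?_⟩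
  · intro y
    obtain ⟨i, U, hU, hyU⟩ := hcov (g y)
    exact ⟨i, g ⁻¹' U, ⟨U, hU, rfl⟩, hyU⟩
  · rintro i W ⟨U, hU, rfl⟩ W' ⟨V, hV, rfl⟩ hne y hy y' hy'
    have hUV : U ≠ V := fun h => hne (by rw [h])
    exact hr'prop y y' (hdisj i U hU V hV hUV _ hy _ hy')
  · rintro i W ⟨U, hU, rfl⟩ y hy y' hy'
    exact hD' y y' (hdiam i U hU _ hy _ hy')

/-- Asymptotic dimension is invariant under coarse equivalence. -/
theorem asdim_coarse_invariant {X Y : Type*} [MetricSpace X] [MetricSpace Y] (f : X → Y)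
    (hf : IsCoarseEquiv f) (n : ℕ) : AsdimLE n X ↔ AsdimLE n Y := by
  obtain ⟨ρ₁, ρ₂, hm₁, hm₂, htend, hbd, R, hR, hdense⟩ := hf
  choose g hg using hdense
  constructor
  · -- X → Y : pull back along g
    apply asdim_pullback g n
    · intro r hrpos
      obtain ⟨t, ht⟩ := (Filter.tendsto_atTop_atTop.mp htend) (r + 2 * R + 1)
      refine ⟨max t 1, lt_of_lt_of_le one_pos (le_max_right _ _), fun y y' hlt => ?_⟩
      have h1 : r + 2 * R + 1 ≤ ρ₁ (dist (g y) (g y')) :=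
        ht _ (le_of_lt (lt_of_le_of_lt (le_max_left t 1) hlt))
      have h2 : ρ₁ (dist (g y) (g y')) ≤ dist (f (g y)) (f (g y')) := (hbd _ _).1
      have h3 : dist (f (g y)) (f (g y')) ≤ R + dist y y' + R := by
        calc dist (f (g y)) (f (g y')) ≤ dist (f (g y)) y + dist y (f (g y')) :=
              dist_triangle _ _ _
          _ ≤ dist (f (g y)) y + (dist y y' + dist y' (f (g y'))) :=
              add_le_add_right (dist_triangle _ _ _) _
          _ ≤ R + (dist y y' + R) := by
              rw [dist_comm (f (g y)) y]
              exact add_le_add (hg y) (add_le_add_right (hg y') _)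
          _ = R + dist y y' + R := by ring
      linarith
    · intro D
      refine ⟨R + ρ₂ D + R, fun y y' hle => ?_⟩
      have h2 : dist (f (g y)) (f (g y')) ≤ ρ₂ D :=
        le_trans (hbd _ _).2 (hm₂ hle)
      calc dist y y' ≤ dist y (f (g y)) + dist (f (g y)) y' := dist_triangle _ _ _
        _ ≤ dist y (f (g y)) + (dist (f (g y)) (f (g y')) + dist (f (g y')) y') :=
            add_le_add_right (dist_triangle _ _ _) _
        _ ≤ R + (ρ₂ D + R) := by
            rw [dist_comm (f (g y')) y']
            exact add_le_add (hg y) (add_le_add h2 (hg y'))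
        _ = R + ρ₂ D + R := by ring
  · -- Y → X : pull back along f
    apply asdim_pullback f n
    · intro r hrpos
      refine ⟨max (ρ₂ r) 1, lt_of_lt_of_le one_pos (le_max_right _ _), fun x x' hlt => ?_⟩
      have h2 : ρ₂ r < ρ₂ (dist x x') :=
        lt_of_le_of_lt (le_max_left _ _) (lt_of_lt_of_le hlt (hbd _ _).2)
      by_contra hle
      exact absurd (hm₂ (not_lt.mp hle)) (not_le.mpr h2)
    · intro D
      obtain ⟨t, ht⟩ := (Filter.tendsto_atTop_atTop.mp htend) (D + 1)
      refine ⟨t, fun x x' hle => ?_⟩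
      by_contra hgt
      have h1 : D + 1 ≤ ρ₁ (dist x x') := ht _ (le_of_lt (not_le.mp hgt))
      have h2 : ρ₁ (dist x x') ≤ dist (f x) (f x') := (hbd _ _).1
      linarith
end

section
/- Let X be a metric space, let r, R, D > 0 with R ≥ r. Let 𝒰 be an r-disjoint family of subsets of X each of diameter at most R, and let 𝒱 be a 5R-disjoint family of subsets of X each of diameter at most D. Then the r-saturated union 𝒱 ∪_r 𝒰 = {N_r(V;𝒰) : V ∈ 𝒱} ∪ {U ∈ 𝒰 : d(U, V) > r for all V ∈ 𝒱}, where N_r(V;𝒰) = V ∪ ⋃{U ∈ 𝒰 : d(U,V) ≤ r}, is an r-disjoint family each of whose members has diameter at most D + 2(r+R). -/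
/-- `A` and `B` come within distance `r` of each other: `d(A,B) ≤ r`. -/
def SetNear {X : Type*} [MetricSpace X] (r : ℝ) (A B : Set X) : Prop :=
  ∃ x ∈ A, ∃ y ∈ B, dist x y ≤ r

/-- `N_r(V;𝒰)`: the union of `V` with all members of `𝒰` at distance at most `r` from `V`. -/
def satNbhd {X : Type*} [MetricSpace X] (r : ℝ) (𝒰 : Set (Set X)) (V : Set X) : Set X :=
  V ∪ ⋃₀ {U ∈ 𝒰 | SetNear r U V}

/-- The `r`-saturated union `𝒱 ∪_r 𝒰`. -/
def satUnion {X : Type*} [MetricSpace X] (r : ℝ) (𝒱 𝒰 : Set (Set X)) : Set (Set X) :=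
  (satNbhd r 𝒰) '' 𝒱 ∪ {U ∈ 𝒰 | ∀ V ∈ 𝒱, ¬ SetNear r U V}

lemma satNbhd_close {X : Type*} [MetricSpace X] {r R : ℝ} (hr : 0 ≤ r) (hR : 0 ≤ R)
    {𝒰 : Set (Set X)} (h𝒰b : ∀ U ∈ 𝒰, DiamLE R U) {V : Set X} {x : X}
    (hx : x ∈ satNbhd r 𝒰 V) : ∃ v ∈ V, dist x v ≤ r + R := by
  rcases hx with hx | hx
  · exact ⟨x, hx, by simpa using add_nonneg hr hR⟩
  · rcases hx with ⟨U, ⟨hU𝒰, u, hu, v, hv, huv⟩, hxU⟩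
    refine ⟨v, hv, ?_⟩
    calc dist x v ≤ dist x u + dist u v := dist_triangle _ _ _
      _ ≤ R + r := add_le_add (h𝒰b U hU𝒰 x hxU u hu) huv
      _ = r + R := by ring

lemma nbhd_leftover {X : Type*} [MetricSpace X] {r : ℝ} {𝒰 𝒱 : Set (Set X)}
    (h𝒰d : RDisjoint r 𝒰) {V U : Set X} (hV : V ∈ 𝒱) (hU : U ∈ 𝒰)
    (hfar : ∀ V' ∈ 𝒱, ¬ SetNear r U V') {x y : X}
    (hx : x ∈ satNbhd r 𝒰 V) (hy : y ∈ U) : r < dist x y := by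
  rcases hx with hx | hx
  · by_contra h
    push_neg at h
    exact hfar V hV ⟨y, hy, x, hx, by rwa [dist_comm]⟩
  · rcases hx with ⟨U', ⟨hU'𝒰, hnear⟩, hxU'⟩
    have hne : U' ≠ U := by
      rintro rfl
      exact hfar V hV hnear
    exact h𝒰d U' hU'𝒰 U hU hne x hxU' y hy

/-- If `𝒰` is `r`-disjoint and `R`-bounded (with `R ≥ r`) and `𝒱` is `5R`-disjoint and
`D`-bounded, then the `r`-saturated union `𝒱 ∪_r 𝒰` is `r`-disjoint and
`(D + 2(r+R))`-bounded. -/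
theorem satUnion_rDisjoint_bounded {X : Type*} [MetricSpace X] (r R D : ℝ)
    (hr : 0 < r) (hrR : r ≤ R) (hD : 0 < D) (𝒰 𝒱 : Set (Set X))
    (h𝒰d : RDisjoint r 𝒰) (h𝒰b : ∀ U ∈ 𝒰, DiamLE R U)
    (h𝒱d : RDisjoint (5 * R) 𝒱) (h𝒱b : ∀ V ∈ 𝒱, DiamLE D V) :
    RDisjoint r (satUnion r 𝒱 𝒰) ∧
      ∀ W ∈ satUnion r 𝒱 𝒰, DiamLE (D + 2 * (r + R)) W := by
  have hr' : (0:ℝ) ≤ r := le_of_lt hr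
  have hR' : (0:ℝ) ≤ R := le_trans hr' hrR
  constructor
  · rintro W hW W' hW' hne x hx y hy
    rcases hW with ⟨V, hV, rfl⟩ | ⟨hU, hfar⟩
    · rcases hW' with ⟨V', hV', rfl⟩ | ⟨hU', hfar'⟩
      · have hVne : V ≠ V' := fun h => hne (by rw [h])
        obtain ⟨v, hv, hxv⟩ := satNbhd_close hr' hR' h𝒰b hx
        obtain ⟨v', hv', hyv'⟩ := satNbhd_close hr' hR' h𝒰b hy
        have h5 : 5 * R < dist v v' := h𝒱d V hV V' hV' hVne v hv v' hv'
        have htri : dist v v' ≤ dist v x + dist x y + dist y v' :=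
          dist_triangle4 v x y v'
        rw [dist_comm v x] at htri
        linarith
      · exact nbhd_leftover h𝒰d hV hU' hfar' hx hy
    · rcases hW' with ⟨V', hV', rfl⟩ | ⟨hU', hfar'⟩
      · rw [dist_comm]
        exact nbhd_leftover h𝒰d hV' hU hfar hy hx
      · exact h𝒰d _ hU _ hU' hne x hx y hy
  · rintro W (⟨V, hV, rfl⟩ | ⟨hU, -⟩)
    · intro x hx y hy
      obtain ⟨v, hv, hxv⟩ := satNbhd_close hr' hR' h𝒰b hx
      obtain ⟨v', hv', hyv'⟩ := satNbhd_close hr' hR' h𝒰b hy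
      have hvv : dist v v' ≤ D := h𝒱b V hV v hv v' hv'
      have htri : dist x y ≤ dist x v + dist v v' + dist v' y :=
        dist_triangle4 x v v' y
      rw [dist_comm v' y] at htri
      linarith
    · intro x hx y hy
      have := h𝒰b _ hU x hx y hy
      linarith
end

section
/- (Union Theorem) Let X be a metric space written as a union X = ⋃_α X_α of subsets, and let n ∈ ℕ. Suppose (i) the family {X_α} satisfies asdim X_α ≤ n uniformly: for every r > 0 there is R > 0 such that for every α there exist r-disjoint families 𝒰⁰_α, …, 𝒰ⁿ_α of subsets of X_α, each member of diameter at most R, whose union covers X_α; and (ii) for every r > 0 there is a subset Y_r ⊆ X with asdim Y_r ≤ n such that d(X_α ∖ Y_r, X_{α'} ∖ Y_r) ≥ r whenever X_α ≠ X_{α'}. Then asdim X ≤ n. -/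
/-- The Union Theorem: if `X = ⋃ α, Xa α` where the family `Xa` satisfies `asdim Xa α ≤ n`
uniformly, and for every `r > 0` there is `Y_r ⊆ X` with `asdim Y_r ≤ n` such that distinct
sets of the family are `r`-separated outside `Y_r`, then `asdim X ≤ n`. -/
theorem asdim_union_theorem {X : Type*} [MetricSpace X] {ι : Type*} (Xa : ι → Set X) (n : ℕ)
    (hcov : ∀ x : X, ∃ α : ι, x ∈ Xa α)
    (huniform : ∀ r : ℝ, 0 < r → ∃ R : ℝ, 0 < R ∧ ∀ α : ι,
      ∃ 𝒰 : Fin (n + 1) → Set (Set X),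
        (∀ i, ∀ U ∈ 𝒰 i, U ⊆ Xa α) ∧
        (∀ x ∈ Xa α, ∃ i, ∃ U ∈ 𝒰 i, x ∈ U) ∧
        (∀ i, RDisjoint r (𝒰 i)) ∧
        (∀ i, ∀ U ∈ 𝒰 i, DiamLE R U))
    (hY : ∀ r : ℝ, 0 < r → ∃ Y : Set X, AsdimLE n ↥Y ∧
      ∀ α α' : ι, Xa α ≠ Xa α' →
        ∀ x ∈ Xa α \ Y, ∀ x' ∈ Xa α' \ Y, r ≤ dist x x') :
    AsdimLE n X := by
  classical
  intro r hr
  obtain ⟨Y, hYdim, hsep⟩ := hY (2 * r) (by linarith)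
  obtain ⟨R, hRpos, hfam⟩ := huniform r hr
  choose 𝒰 hsub hcovU hdisjU hdiamU using hfam
  -- canonical family depending only on the set `Xa α`
  let FamS : Set X → Fin (n + 1) → Set (Set X) := fun S =>
    if h : ∃ β, Xa β = S then 𝒰 h.choose else fun _ => ∅
  let Fam : ι → Fin (n + 1) → Set (Set X) := fun α => FamS (Xa α)
  have hFeq : ∀ α α', Xa α = Xa α' → Fam α = Fam α' := fun α α' h => congrArg FamS h
  have hFamP : ∀ α : ι, ∃ β, Xa β = Xa α ∧ Fam α = 𝒰 β := by
    intro α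
    have h : ∃ β, Xa β = Xa α := ⟨α, rfl⟩
    refine ⟨h.choose, h.choose_spec, ?_⟩
    simp only [Fam, FamS, dif_pos h]
  have hFsub : ∀ α i, ∀ U ∈ Fam α i, U ⊆ Xa α := by
    intro α i U hU
    obtain ⟨β, hβ, hFα⟩ := hFamP α
    rw [hFα] at hU
    rw [← hβ]
    exact hsub β i U hU
  have hFcov : ∀ α, ∀ x ∈ Xa α, ∃ i, ∃ U ∈ Fam α i, x ∈ U := by
    intro α x hx
    obtain ⟨β, hβ, hFα⟩ := hFamP α
    rw [hFα]
    exact hcovU β x (hβ ▸ hx)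
  have hFdisj : ∀ α i, RDisjoint r (Fam α i) := by
    intro α i
    obtain ⟨β, hβ, hFα⟩ := hFamP α
    rw [hFα]; exact hdisjU β i
  have hFdiam : ∀ α i, ∀ U ∈ Fam α i, DiamLE R U := by
    intro α i
    obtain ⟨β, hβ, hFα⟩ := hFamP α
    rw [hFα]; exact hdiamU β i
  obtain ⟨𝒱, DY, hVcov, hVdisj, hVdiam⟩ := hYdim (3 * r + 2 * R) (by linarith)
  let Wraw : Fin (n + 1) → Set (Set X) := fun i => {W | ∃ α, ∃ U ∈ Fam α i, W = U \ Y}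
  let Big : Fin (n + 1) → Set ↥Y → Set X := fun i V =>
    {x | (∃ v ∈ V, (v : X) = x) ∨
      ∃ W ∈ Wraw i, (∃ w ∈ W, ∃ v ∈ V, dist w (v : X) ≤ r) ∧ x ∈ W}
  let Free : Fin (n + 1) → Set X → Prop := fun i W =>
    ∀ V ∈ 𝒱 i, ∀ w ∈ W, ∀ v ∈ V, r < dist w (v : X)
  let 𝒲 : Fin (n + 1) → Set (Set X) := fun i =>
    {A | ∃ V ∈ 𝒱 i, A = Big i V} ∪ {W | W ∈ Wraw i ∧ Free i W}
  have hWsub : ∀ i, ∀ W ∈ Wraw i, (∃ α, W ⊆ Xa α \ Y) ∧ DiamLE R W := by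
    intro i W hW
    obtain ⟨α, U, hU, rfl⟩ := hW
    constructor
    · exact ⟨α, fun x hx => ⟨hFsub α i U hU hx.1, hx.2⟩⟩
    · intro x hx y hy; exact hFdiam α i U hU x hx.1 y hy.1
  have hWdisj : ∀ i, ∀ W ∈ Wraw i, ∀ W' ∈ Wraw i, W ≠ W' →
      ∀ x ∈ W, ∀ y ∈ W', r < dist x y := by
    intro i W hW W' hW' hne x hx y hy
    obtain ⟨α, U, hU, rfl⟩ := hW
    obtain ⟨α', U', hU', rfl⟩ := hW'
    by_cases h : Xa α = Xa α'
    · have hF := hFeq α α' h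
      have hU'2 : U' ∈ Fam α i := by rw [hF]; exact hU'
      have hUU' : U ≠ U' := by rintro rfl; exact hne rfl
      exact hFdisj α i U hU U' hU'2 hUU' x hx.1 y hy.1
    · have h2 := hsep α α' h x ⟨hFsub α i U hU hx.1, hx.2⟩ y ⟨hFsub α' i U' hU' hy.1, hy.2⟩
      linarith
  have hBigNear : ∀ i V, ∀ x ∈ Big i V, ∃ v ∈ V, dist x (v : X) ≤ R + r := by
    intro i V x hx
    rcases hx with ⟨v, hv, rfl⟩ | ⟨W, hW, ⟨w, hw, v, hv, hd⟩, hxW⟩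
    · exact ⟨v, hv, by rw [dist_self]; linarith⟩
    · refine ⟨v, hv, ?_⟩
      have h1 := (hWsub i W hW).2 x hxW w hw
      calc dist x (v : X) ≤ dist x w + dist w (v : X) := dist_triangle _ _ _
        _ ≤ R + r := by linarith
  have hBF : ∀ i, ∀ V ∈ 𝒱 i, ∀ W ∈ Wraw i, Free i W →
      ∀ x ∈ Big i V, ∀ y ∈ W, r < dist x y := by
    intro i V hV W hW hfree x hx y hy
    rcases hx with ⟨v, hv, rfl⟩ | ⟨W', hW', ⟨w, hw, v, hv, hd⟩, hxW'⟩
    · have := hfree V hV y hy v hv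
      rwa [dist_comm]
    · have hne : W' ≠ W := by
        rintro rfl
        exact absurd hd (not_le.mpr (hfree V hV w hw v hv))
      exact hWdisj i W' hW' W hW hne x hxW' y hy
  refine ⟨𝒲, |DY| + 3 * R + 2 * r, ?_, ?_, ?_⟩
  · -- cover
    intro x
    by_cases hx : x ∈ Y
    · obtain ⟨i, V, hV, hxV⟩ := hVcov ⟨x, hx⟩
      exact ⟨i, Big i V, Or.inl ⟨V, hV, rfl⟩, Or.inl ⟨⟨x, hx⟩, hxV, rfl⟩⟩
    · obtain ⟨α, hxα⟩ := hcov x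
      obtain ⟨i, U, hU, hxU⟩ := hFcov α x hxα
      have hWmem : (U \ Y) ∈ Wraw i := ⟨α, U, hU, rfl⟩
      by_cases hfree : Free i (U \ Y)
      · exact ⟨i, U \ Y, Or.inr ⟨hWmem, hfree⟩, hxU, hx⟩
      · simp only [Free, not_forall, not_lt] at hfree
        obtain ⟨V, hV, w, hw, v, hv, hd⟩ := hfree
        exact ⟨i, Big i V, Or.inl ⟨V, hV, rfl⟩,
          Or.inr ⟨U \ Y, hWmem, ⟨w, hw, v, hv, hd⟩, hxU, hx⟩⟩
  · -- disjointness
    intro i A hA B hB hAB x hxA y hyB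
    rcases hA with ⟨V, hV, rfl⟩ | ⟨hAW, hAfree⟩
    · rcases hB with ⟨V', hV', rfl⟩ | ⟨hBW, hBfree⟩
      · have hVV' : V ≠ V' := by rintro rfl; exact hAB rfl
        obtain ⟨v, hv, h1⟩ := hBigNear i V x hxA
        obtain ⟨v', hv', h2⟩ := hBigNear i V' y hyB
        have hd := hVdisj i V hV V' hV' hVV' v hv v' hv'
        rw [Subtype.dist_eq] at hd
        have h3 : dist (v : X) (v' : X) ≤ dist (v : X) x + dist x y + dist y (v' : X) :=
          dist_triangle4 _ _ _ _
        rw [dist_comm (v : X) x] at h3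
        linarith
      · exact hBF i V hV B hBW hBfree x hxA y hyB
    · rcases hB with ⟨V', hV', rfl⟩ | ⟨hBW, hBfree⟩
      · rw [dist_comm]
        exact hBF i V' hV' A hAW hAfree y hyB x hxA
      · exact hWdisj i A hAW B hBW hAB x hxA y hyB
  · -- diameters
    intro i A hA x hx y hy
    rcases hA with ⟨V, hV, rfl⟩ | ⟨hAW, -⟩
    · obtain ⟨v, hv, h1⟩ := hBigNear i V x hx
      obtain ⟨v', hv', h2⟩ := hBigNear i V y hy
      have h3 := hVdiam i V hV v hv v' hv'
      rw [Subtype.dist_eq] at h3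
      have h4 : dist x y ≤ dist x (v : X) + dist (v : X) (v' : X) + dist (v' : X) y :=
        dist_triangle4 _ _ _ _
      rw [dist_comm (v' : X) y] at h4
      have h5 := le_abs_self DY
      linarith
    · have h1 := (hWsub i A hAW).2 x hx y hy
      have h2 := abs_nonneg DY
      linarith
end

section
/- (Finite Union Theorem) Let X be a metric space with subsets A, B ⊆ X, each given the restricted metric, and let n ∈ ℕ. If asdim A ≤ n and asdim B ≤ n, then asdim(A ∪ B) ≤ n. -/
/-- Finite Union Theorem: if `A, B ⊆ X` (with the restricted metrics) satisfy `asdim A ≤ n`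
and `asdim B ≤ n`, then `asdim (A ∪ B) ≤ n`. -/
theorem asdim_union_le {X : Type*} [MetricSpace X] (A B : Set X) (n : ℕ)
    (hA : AsdimLE n ↥A) (hB : AsdimLE n ↥B) : AsdimLE n ↥(A ∪ B) := by
  intro r hr
  obtain ⟨𝒱, DA, hVcov, hVdisj, hVdiam⟩ := hA r hr
  set D₁ : ℝ := max DA 0 with hD₁def
  have hD₁0 : (0:ℝ) ≤ D₁ := le_max_right _ _
  have hDA : DA ≤ D₁ := le_max_left _ _
  have hRpos : (0:ℝ) < 3*r + 2*D₁ := by positivity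
  obtain ⟨𝒲, DB, hWcov, hWdisj, hWdiam⟩ := hB (3*r + 2*D₁) hRpos
  set D₂ : ℝ := max DB 0 with hD₂def
  have hDB : DB ≤ D₂ := le_max_left _ _
  -- inclusion maps
  let ι : ↥A → ↥(A ∪ B) := fun x => ⟨x.1, Or.inl x.2⟩
  let κ : ↥B → ↥(A ∪ B) := fun x => ⟨x.1, Or.inr x.2⟩
  -- nearness of an A-piece to a B-piece
  let near : Set ↥A → Set ↥B → Prop := fun V W => ∃ x ∈ V, ∃ y ∈ W, dist (x:X) (y:X) ≤ r
  -- saturation of a B-piece by nearby A-pieces of family i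
  let sat : Fin (n+1) → Set ↥B → Set ↥(A ∪ B) := fun i W =>
    κ '' W ∪ ⋃ V ∈ {V | V ∈ 𝒱 i ∧ near V W}, ι '' V
  refine ⟨fun i => {S | (∃ V, V ∈ 𝒱 i ∧ S = ι '' V ∧ ∀ W ∈ 𝒲 i, ¬ near V W) ∨
      (∃ W ∈ 𝒲 i, S = sat i W)}, max D₁ (D₂ + 2*(r + D₁)), ?_, ?_, ?_⟩
  · -- covering
    rintro ⟨x, hx | hx⟩
    · -- x ∈ A
      obtain ⟨i, V, hV, haV⟩ := hVcov ⟨x, hx⟩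
      by_cases hnear : ∃ W ∈ 𝒲 i, near V W
      · obtain ⟨W, hW, hnVW⟩ := hnear
        refine ⟨i, sat i W, Or.inr ⟨W, hW, rfl⟩, Or.inr ?_⟩
        exact Set.mem_biUnion ⟨hV, hnVW⟩ ⟨⟨x, hx⟩, haV, rfl⟩
      · push_neg at hnear
        exact ⟨i, ι '' V, Or.inl ⟨V, hV, rfl, hnear⟩, ⟨⟨x, hx⟩, haV, rfl⟩⟩
    · -- x ∈ B
      obtain ⟨i, W, hW, hbW⟩ := hWcov ⟨x, hx⟩
      exact ⟨i, sat i W, Or.inr ⟨W, hW, rfl⟩, Or.inl ⟨⟨x, hx⟩, hbW, rfl⟩⟩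
  · -- r-disjointness
    -- every point of `sat i W` is within `r + D₁` of some point of `W`
    have pointNear : ∀ i, ∀ W, W ∈ 𝒲 i → ∀ p ∈ sat i W,
        ∃ w ∈ W, dist (p:X) (w:X) ≤ r + D₁ := by
      intro i W _ p hp
      rcases hp with ⟨w, hw, rfl⟩ | hp
      · exact ⟨w, hw, by simp [κ, dist_self]; linarith⟩
      · simp only [Set.mem_iUnion] at hp
        obtain ⟨V, ⟨hV, x, hxV, y, hyW, hxy⟩, a, haV, rfl⟩ := hp
        have hax : dist (a:X) (x:X) ≤ DA := by
          have := hVdiam i V hV a haV x hxV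
          rwa [Subtype.dist_eq] at this
        refine ⟨y, hyW, ?_⟩
        calc dist ((ι a : ↥(A ∪ B)):X) (y:X) ≤ dist (a:X) (x:X) + dist (x:X) (y:X) :=
              dist_triangle _ _ _
          _ ≤ r + D₁ := by linarith
    -- a "far" A-piece against a saturated B-piece
    have farSat : ∀ i, ∀ V, V ∈ 𝒱 i → (∀ W ∈ 𝒲 i, ¬ near V W) →
        ∀ W, W ∈ 𝒲 i → ∀ a ∈ V, ∀ q ∈ sat i W, r < dist ((ι a : ↥(A ∪ B)):X) (q:X) := by
      intro i V hV hfar W hW a haV q hq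
      have hVW : ∀ x ∈ V, ∀ y ∈ W, r < dist (x:X) (y:X) := by
        intro x hx y hy
        by_contra h
        exact hfar W hW ⟨x, hx, y, hy, le_of_not_gt h⟩
      rcases hq with ⟨w, hw, rfl⟩ | hq
      · exact hVW a haV w hw
      · simp only [Set.mem_iUnion] at hq
        obtain ⟨V', ⟨hV', hnear'⟩, a', haV', rfl⟩ := hq
        have hne : V ≠ V' := by
          rintro rfl; exact hfar W hW hnear'
        have := hVdisj i V hV V' hV' hne a haV a' haV'
        rwa [Subtype.dist_eq] at this
    intro i U hU U' hU' hne p hp q hq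
    rw [Subtype.dist_eq]
    rcases hU with ⟨V, hV, rfl, hfar⟩ | ⟨W, hW, rfl⟩
    · rcases hU' with ⟨V', hV', rfl, hfar'⟩ | ⟨W', hW', rfl⟩
      · -- far vs far
        obtain ⟨a, haV, rfl⟩ := hp
        obtain ⟨a', haV', rfl⟩ := hq
        have hVne : V ≠ V' := by rintro rfl; exact hne rfl
        have := hVdisj i V hV V' hV' hVne a haV a' haV'
        rwa [Subtype.dist_eq] at this
      · obtain ⟨a, haV, rfl⟩ := hp
        exact farSat i V hV hfar W' hW' a haV q hq
    · rcases hU' with ⟨V', hV', rfl, hfar'⟩ | ⟨W', hW', rfl⟩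
      · obtain ⟨a, haV', rfl⟩ := hq
        have := farSat i V' hV' hfar' W hW a haV' p hp
        rwa [dist_comm] at this
      · -- sat vs sat
        have hWne : W ≠ W' := by rintro rfl; exact hne rfl
        obtain ⟨w, hw, hpw⟩ := pointNear i W hW p hp
        obtain ⟨w', hw', hqw'⟩ := pointNear i W' hW' q hq
        have hww' : 3*r + 2*D₁ < dist (w:X) (w':X) := by
          have := hWdisj i W hW W' hW' hWne w hw w' hw'
          rwa [Subtype.dist_eq] at this
        have htri : dist (w:X) (w':X) ≤
            dist (w:X) (p:X) + dist (p:X) (q:X) + dist (q:X) (w':X) :=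
          dist_triangle4 _ _ _ _
        rw [dist_comm (w:X) (p:X)] at htri
        linarith
  · -- diameter bound
    have pointNear : ∀ i, ∀ W, W ∈ 𝒲 i → ∀ p ∈ sat i W,
        ∃ w ∈ W, dist (p:X) (w:X) ≤ r + D₁ := by
      intro i W _ p hp
      rcases hp with ⟨w, hw, rfl⟩ | hp
      · exact ⟨w, hw, by simp [κ, dist_self]; linarith⟩
      · simp only [Set.mem_iUnion] at hp
        obtain ⟨V, ⟨hV, x, hxV, y, hyW, hxy⟩, a, haV, rfl⟩ := hp
        have hax : dist (a:X) (x:X) ≤ DA := by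
          have := hVdiam i V hV a haV x hxV
          rwa [Subtype.dist_eq] at this
        refine ⟨y, hyW, ?_⟩
        calc dist ((ι a : ↥(A ∪ B)):X) (y:X) ≤ dist (a:X) (x:X) + dist (x:X) (y:X) :=
              dist_triangle _ _ _
          _ ≤ r + D₁ := by linarith
    rintro i U (⟨V, hV, rfl, -⟩ | ⟨W, hW, rfl⟩) p hp q hq
    · obtain ⟨a, haV, rfl⟩ := hp
      obtain ⟨a', haV', rfl⟩ := hq
      have := hVdiam i V hV a haV a' haV'
      rw [Subtype.dist_eq] at this
      rw [Subtype.dist_eq]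
      exact le_trans this (le_trans hDA (le_max_left _ _))
    · obtain ⟨w, hw, hpw⟩ := pointNear i W hW p hp
      obtain ⟨w', hw', hqw'⟩ := pointNear i W hW q hq
      have hww' : dist (w:X) (w':X) ≤ DB := by
        have := hWdiam i W hW w hw w' hw'
        rwa [Subtype.dist_eq] at this
      rw [Subtype.dist_eq]
      have htri : dist (p:X) (q:X) ≤
          dist (p:X) (w:X) + dist (w:X) (w':X) + dist (w':X) (q:X) :=
        dist_triangle4 _ _ _ _
      rw [dist_comm (w':X) (q:X)] at htri
      have : dist (p:X) (q:X) ≤ D₂ + 2*(r + D₁) := by linarith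
      exact le_trans this (le_max_right _ _)
end

section
/- Let X be a metric space, n ∈ ℕ, and let D^{n+1} : (0,∞) → (0,∞) be an n-dimensional control function for X. Define D^{i+1}(r) = D^i(3r) + 2r for i ≥ n+1. Then for every k ≥ n+1, D^k is an (n,k)-dimensional control function for X: for every r > 0 there exist k families 𝒰₁, …, 𝒰_k of subsets of X, each r-disjoint with every member of diameter at most D^k(r), such that every point of X belongs to the union of at least k−n of the families (equivalently, ⋃_{i∈T} 𝒰_i covers X for every T ⊆ {1,…,k} with |T| ≥ n+1). -/
/-- `D` is an `n`-dimensional control function for `X`: for every `r > 0` there are `n + 1`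
families of subsets covering `X`, each `r`-disjoint and with members of diameter at most
`D r`. -/
def IsControl (X : Type*) [MetricSpace X] (n : ℕ) (D : ℝ → ℝ) : Prop :=
  ∀ r : ℝ, 0 < r → ∃ 𝒰 : Fin (n + 1) → Set (Set X),
    (∀ x : X, ∃ i, ∃ U ∈ 𝒰 i, x ∈ U) ∧
    (∀ i, RDisjoint r (𝒰 i)) ∧
    (∀ i, ∀ U ∈ 𝒰 i, DiamLE (D r) U)

/-- `D` is an `(n,k)`-dimensional control function for `X`: for every `r > 0` there are `k`
families of subsets, each `r`-disjoint with members of diameter at most `D r`, such that any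
`n + 1` of the families already cover `X`. -/
def IsNKControl (X : Type*) [MetricSpace X] (n k : ℕ) (D : ℝ → ℝ) : Prop :=
  ∀ r : ℝ, 0 < r → ∃ 𝒰 : Fin k → Set (Set X),
    (∀ i, RDisjoint r (𝒰 i)) ∧
    (∀ i, ∀ U ∈ 𝒰 i, DiamLE (D r) U) ∧
    (∀ T : Finset (Fin k), n + 1 ≤ T.card → ∀ x : X, ∃ i ∈ T, ∃ U ∈ 𝒰 i, x ∈ U)

lemma exists_step {X : Type*} [MetricSpace X] {n k : ℕ} {r D : ℝ} (hr : 0 < r)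
    (hk : n + 1 ≤ k) (𝒰 : Fin k → Set (Set X))
    (hdisj : ∀ i, RDisjoint (3 * r) (𝒰 i))
    (hdiam : ∀ i, ∀ U ∈ 𝒰 i, DiamLE D U)
    (hcov : ∀ T : Finset (Fin k), n + 1 ≤ T.card → ∀ x : X, ∃ i ∈ T, ∃ U ∈ 𝒰 i, x ∈ U) :
    ∃ 𝒱 : Fin (k + 1) → Set (Set X),
      (∀ i, RDisjoint r (𝒱 i)) ∧
      (∀ i, ∀ U ∈ 𝒱 i, DiamLE (D + 2 * r) U) ∧
      (∀ T : Finset (Fin (k + 1)), n + 1 ≤ T.card → ∀ x : X, ∃ i ∈ T, ∃ U ∈ 𝒱 i, x ∈ U) := by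
  classical
  let Nb : Set X → Set X := fun U => {y | ∃ u ∈ U, dist y u ≤ r}
  let E : Fin k → Set X := fun j => {y | ∃ j' : Fin k, j' < j ∧ ∃ V ∈ 𝒰 j', ∃ v ∈ V, dist y v ≤ r}
  let W : Set (Set X) := {A | ∃ j : Fin k, ∃ U ∈ 𝒰 j, A = U \ E j}
  refine ⟨Fin.lastCases W (fun j => Nb '' 𝒰 j), ?_, ?_, ?_⟩
  · intro i
    induction i using Fin.lastCases with
    | last =>
        simp only [Fin.lastCases_last]
        rintro A ⟨j, U, hU, rfl⟩ B ⟨j', V, hV, rfl⟩ hAB x hx y hy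
        rcases lt_trichotomy j j' with h | h | h
        · by_contra hle
          push_neg at hle
          exact hy.2 ⟨j, h, U, hU, x, hx.1, by rw [dist_comm]; exact hle⟩
        · subst h
          have hUV : U ≠ V := by rintro rfl; exact hAB rfl
          have h1 := hdisj j U hU V hV hUV x hx.1 y hy.1
          linarith
        · by_contra hle
          push_neg at hle
          exact hx.2 ⟨j', h, V, hV, y, hy.1, hle⟩
    | cast j =>
        simp only [Fin.lastCases_castSucc]
        rintro A ⟨U, hU, rfl⟩ B ⟨V, hV, rfl⟩ hAB x hx y hy
        have hUV : U ≠ V := by rintro rfl; exact hAB rfl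
        obtain ⟨u, hu, hxu⟩ := hx
        obtain ⟨v, hv, hyv⟩ := hy
        have h1 := hdisj j U hU V hV hUV u hu v hv
        have h2 : dist u v ≤ dist u x + dist x y + dist y v := dist_triangle4 u x y v
        rw [dist_comm u x] at h2
        linarith
  · intro i
    induction i using Fin.lastCases with
    | last =>
        simp only [Fin.lastCases_last]
        rintro A ⟨j, U, hU, rfl⟩ x hx y hy
        have h1 := hdiam j U hU x hx.1 y hy.1
        linarith
    | cast j =>
        simp only [Fin.lastCases_castSucc]
        rintro A ⟨U, hU, rfl⟩ x ⟨u, hu, hxu⟩ y ⟨v, hv, hyv⟩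
        have h1 := hdiam j U hU u hu v hv
        have h2 : dist x y ≤ dist x u + dist u v + dist v y := dist_triangle4 x u v y
        rw [dist_comm v y] at h2
        linarith
  · intro T hT x
    by_cases hA : ∃ j : Fin k, j.castSucc ∈ T ∧ ∃ U ∈ 𝒰 j, x ∈ Nb U
    · obtain ⟨j, hjT, U, hU, hx⟩ := hA
      refine ⟨j.castSucc, hjT, Nb U, ?_, hx⟩
      simp only [Fin.lastCases_castSucc]
      exact ⟨U, hU, rfl⟩
    · push_neg at hA
      let T' : Finset (Fin k) := Finset.univ.filter fun j => j.castSucc ∈ T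
      have hT'mem : ∀ j : Fin k, j ∈ T' ↔ j.castSucc ∈ T := by
        intro j; simp [T']
      have hpull : ∀ i ∈ T, i ≠ Fin.last k → i ∈ T'.image Fin.castSucc := by
        intro i hi hne
        refine Finset.mem_image.2 ⟨i.castPred hne, ?_, Fin.castSucc_castPred i hne⟩
        rw [hT'mem, Fin.castSucc_castPred]
        exact hi
      have hxNb : ∀ U : Set X, x ∈ U → x ∈ Nb U := by
        intro U hU
        exact ⟨x, hU, by rw [dist_self]; linarith⟩
      have hlast : Fin.last k ∈ T := by
        by_contra hl
        have hsub : T ⊆ T'.image Fin.castSucc := fun i hi =>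
          hpull i hi (fun h => hl (h ▸ hi))
        have h1 : T.card ≤ T'.card :=
          le_trans (Finset.card_le_card hsub) Finset.card_image_le
        obtain ⟨j, hjT', U, hU, hxU⟩ := hcov T' (le_trans hT h1) x
        exact hA j ((hT'mem j).1 hjT') U hU (hxNb U hxU)
      have hT'card : n ≤ T'.card := by
        have hsub : T.erase (Fin.last k) ⊆ T'.image Fin.castSucc := by
          intro i hi
          obtain ⟨hne, hiT⟩ := Finset.mem_erase.1 hi
          exact hpull i hiT hne
        have he := Finset.card_erase_of_mem hlast
        have h1 : T.card - 1 ≤ T'.card := by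
          calc T.card - 1 = (T.erase (Fin.last k)).card := he.symm
            _ ≤ (T'.image Fin.castSucc).card := Finset.card_le_card hsub
            _ ≤ T'.card := Finset.card_image_le
        omega
      let S : Finset (Fin k) := Finset.univ.filter fun j => ∃ U ∈ 𝒰 j, x ∈ U
      have hScompl : Sᶜ.card ≤ n := by
        by_contra hc
        push_neg at hc
        obtain ⟨j, hjS, U, hU, hxU⟩ := hcov Sᶜ (by omega) x
        rw [Finset.mem_compl] at hjS
        exact hjS (by simp only [S, Finset.mem_filter, Finset.mem_univ, true_and]; exact ⟨U, hU, hxU⟩)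
      have hT'sub : T' ⊆ Sᶜ := by
        intro j hj
        rw [Finset.mem_compl]
        intro hjS
        simp only [S, Finset.mem_filter, Finset.mem_univ, true_and] at hjS
        obtain ⟨U, hU, hxU⟩ := hjS
        exact hA j ((hT'mem j).1 hj) U hU (hxNb U hxU)
      have hEq : T' = Sᶜ := Finset.eq_of_subset_of_card_le hT'sub (by omega)
      have hSne : S.Nonempty := by
        rw [← Finset.card_pos]
        have hcc : S.card + Sᶜ.card = k := by
          rw [Finset.card_add_card_compl]
          simp
        omega
      have hi₀S : S.min' hSne ∈ S := S.min'_mem hSne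
      have hi₀ : ∃ U ∈ 𝒰 (S.min' hSne), x ∈ U := by
        simpa only [S, Finset.mem_filter, Finset.mem_univ, true_and] using hi₀S
      obtain ⟨U₀, hU₀, hxU₀⟩ := hi₀
      refine ⟨Fin.last k, hlast, U₀ \ E (S.min' hSne), ?_, hxU₀, ?_⟩
      · simp only [Fin.lastCases_last]
        exact ⟨S.min' hSne, U₀, hU₀, rfl⟩
      · rintro ⟨j, hji, V, hV, v, hv, hd⟩
        have hjS : j ∉ S := fun h => absurd (S.min'_le j h) (not_le.2 hji)
        have hjT' : j ∈ T' := by rw [hEq, Finset.mem_compl]; exact hjS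
        exact hA j ((hT'mem j).1 hjT') V hV ⟨v, hv, hd⟩

/-- If `Dc (n+1)` is an `n`-dimensional control function for `X`, positive on positive reals,
and `Dc (i+1) r = Dc i (3r) + 2r` for `i ≥ n+1`, then for every `k ≥ n+1` the function `Dc k`
is an `(n,k)`-dimensional control function for `X`. -/
theorem nk_control_of_control (X : Type*) [MetricSpace X] (n : ℕ) (Dc : ℕ → ℝ → ℝ)
    (hpos : ∀ r : ℝ, 0 < r → 0 < Dc (n + 1) r)
    (hctrl : IsControl X n (Dc (n + 1)))
    (hrec : ∀ i : ℕ, n + 1 ≤ i → ∀ r : ℝ, Dc (i + 1) r = Dc i (3 * r) + 2 * r) :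
    ∀ k : ℕ, n + 1 ≤ k → IsNKControl X n k (Dc k) := by
  intro k hk
  induction k, hk using Nat.le_induction with
  | base =>
      intro r hr
      obtain ⟨𝒰, hcov, hdisj, hdiam⟩ := hctrl r hr
      refine ⟨𝒰, hdisj, hdiam, ?_⟩
      intro T hT x
      obtain ⟨i, U, hU, hx⟩ := hcov x
      have hcard : T.card = Fintype.card (Fin (n + 1)) := by
        have h1 := T.card_le_univ
        simp only [Finset.card_univ, Fintype.card_fin] at h1 ⊢
        omega
      have hTuniv : T = Finset.univ := Finset.eq_univ_of_card T hcard
      exact ⟨i, by rw [hTuniv]; exact Finset.mem_univ i, U, hU, hx⟩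
  | succ k hk ih =>
      intro r hr
      have h3r : (0 : ℝ) < 3 * r := by linarith
      obtain ⟨𝒰, hdisj, hdiam, hcov⟩ := ih (3 * r) h3r
      obtain ⟨𝒱, h1, h2, h3⟩ := exists_step hr hk 𝒰 hdisj hdiam hcov
      refine ⟨𝒱, h1, ?_, h3⟩
      intro i U hU
      rw [hrec k hk r]
      exact h2 i U hU
end

section
/- (Product Theorem) Let X and Y be metric spaces with asdim X ≤ m and asdim Y ≤ n, and equip X × Y with the product metric d((x,y),(x',y')) = max{d_X(x,x'), d_Y(y,y')}. Then asdim(X × Y) ≤ m + n. -/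
noncomputable def fns {X : Type*} [MetricSpace X] (R : ℝ) (U : Set X) (x : X) : ℝ :=
  max (R - Metric.infDist x U) 0

lemma fns_nonneg {X : Type*} [MetricSpace X] (R : ℝ) (U : Set X) (x : X) : 0 ≤ fns R U x :=
  le_max_right _ _

lemma fns_le_add_dist {X : Type*} [MetricSpace X] (R : ℝ) (U : Set X) (x x' : X) :
    fns R U x' ≤ fns R U x + dist x x' := by
  have h1 : Metric.infDist x U ≤ Metric.infDist x' U + dist x x' :=
    Metric.infDist_le_infDist_add_dist
  have h2 : R - Metric.infDist x U ≤ fns R U x := le_max_left _ _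
  have h3 : (0:ℝ) ≤ fns R U x := fns_nonneg R U x
  have h4 : (0:ℝ) ≤ dist x x' := dist_nonneg
  apply max_le
  · linarith
  · linarith

lemma fns_of_mem {X : Type*} [MetricSpace X] {R : ℝ} (hR : 0 ≤ R) {U : Set X} {x : X}
    (hx : x ∈ U) : fns R U x = R := by
  unfold fns
  rw [Metric.infDist_zero_of_mem hx]
  simpa using hR

lemma exists_near_of_fns_pos {X : Type*} [MetricSpace X] {R : ℝ} {U : Set X} {x : X}
    (hU : U.Nonempty) (h : 0 < fns R U x) : ∃ u ∈ U, dist x u < R := by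
  have hlt : Metric.infDist x U < R := by
    by_contra hge
    push_neg at hge
    have : fns R U x = 0 := max_eq_right (by linarith)
    linarith
  exact (Metric.infDist_lt_iff hU).1 hlt

def Side {X : Type*} [MetricSpace X] {μ : ℕ} (R a b : ℝ) (𝒰 : Fin μ → Set (Set X))
    (I : Finset (Fin μ)) (u : Fin μ → Set X) (x : X) : Prop :=
  (∀ i ∈ I, a ≤ fns R (u i) x) ∧
  (∀ i, ∀ U ∈ 𝒰 i, ¬(i ∈ I ∧ U = u i) → fns R U x ≤ b)

lemma side_congr_mp {X : Type*} [MetricSpace X] {μ : ℕ} {R a b : ℝ} {𝒰 : Fin μ → Set (Set X)}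
    {I : Finset (Fin μ)} {u u' : Fin μ → Set X} {x : X}
    (h : ∀ i ∈ I, u i = u' i) (hs : Side R a b 𝒰 I u x) : Side R a b 𝒰 I u' x := by
  obtain ⟨h1, h2⟩ := hs
  constructor
  · intro i hi
    rw [← h i hi]
    exact h1 i hi
  · intro i U hU hg
    apply h2 i U hU
    rintro ⟨hi, he⟩
    exact hg ⟨hi, he.trans (h i hi)⟩

def Ablock {X Y : Type*} [MetricSpace X] [MetricSpace Y] {μ ν : ℕ} (R : ℝ) (c : ℕ → ℝ)
    (N : ℕ) (𝒰 : Fin μ → Set (Set X)) (𝒱 : Fin ν → Set (Set Y))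
    (I : Finset (Fin μ)) (u : Fin μ → Set X) (J : Finset (Fin ν)) (v : Fin ν → Set Y) :
    Set (X × Y) :=
  { p | ∃ ℓ, ℓ ≤ N ∧ Side R (c ℓ) (c (ℓ+1)) 𝒰 I u p.1 ∧ Side R (c ℓ) (c (ℓ+1)) 𝒱 J v p.2 }

lemma ablock_congr {X Y : Type*} [MetricSpace X] [MetricSpace Y] {μ ν : ℕ} {R : ℝ}
    {c : ℕ → ℝ} {N : ℕ} {𝒰 : Fin μ → Set (Set X)} {𝒱 : Fin ν → Set (Set Y)}
    {I : Finset (Fin μ)} {u u' : Fin μ → Set X} {J : Finset (Fin ν)} {v v' : Fin ν → Set Y}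
    (hu : ∀ i ∈ I, u i = u' i) (hv : ∀ j ∈ J, v j = v' j) :
    Ablock R c N 𝒰 𝒱 I u J v = Ablock R c N 𝒰 𝒱 I u' J v' := by
  ext p
  constructor
  · rintro ⟨ℓ, hℓ, hx, hy⟩
    exact ⟨ℓ, hℓ, side_congr_mp hu hx, side_congr_mp hv hy⟩
  · rintro ⟨ℓ, hℓ, hx, hy⟩
    exact ⟨ℓ, hℓ, side_congr_mp (fun i hi => (hu i hi).symm) hx,
      side_congr_mp (fun j hj => (hv j hj).symm) hy⟩

/-- Product Theorem: `asdim (X × Y) ≤ asdim X + asdim Y`, where `X × Y` carries the sup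
metric `d((x,y),(x',y')) = max (d x x') (d y y')`. -/
theorem asdim_prod_le {X Y : Type*} [MetricSpace X] [MetricSpace Y] (m n : ℕ)
    (hX : AsdimLE m X) (hY : AsdimLE n Y) : AsdimLE (m + n) (X × Y) := by
  classical
  intro r hr
  set R : ℝ := (m + n + 1) * (r + 1) with hRdef
  have hRpos : 0 < R := by positivity
  obtain ⟨𝒰₀, DX, hXcov, hXdisj, hXdiam⟩ := hX (2*R+1) (by linarith)
  obtain ⟨𝒱₀, DY, hYcov, hYdisj, hYdiam⟩ := hY (2*R+1) (by linarith)
  set 𝒰 : Fin (m+1) → Set (Set X) := fun i => {U ∈ 𝒰₀ i | U.Nonempty} with h𝒰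
  set 𝒱 : Fin (n+1) → Set (Set Y) := fun j => {V ∈ 𝒱₀ j | V.Nonempty} with h𝒱
  set c : ℕ → ℝ := fun ℓ => R - ℓ * (r+1) with hc
  -- basic threshold facts
  have hcle : ∀ {a b : ℕ}, a ≤ b → c b ≤ c a := by
    intro a b hab
    have : (a:ℝ) ≤ (b:ℝ) := by exact_mod_cast hab
    simp only [hc]
    nlinarith
  have hcR : ∀ ℓ : ℕ, c ℓ ≤ R := by
    intro ℓ
    have : (0:ℝ) ≤ (ℓ:ℝ) := by positivity
    simp only [hc]
    nlinarith
  have hcpos : ∀ {ℓ : ℕ}, ℓ ≤ m + n → r + 1 ≤ c ℓ := by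
    intro ℓ hℓ
    have : (ℓ:ℝ) ≤ (m:ℝ) + n := by exact_mod_cast hℓ
    simp only [hc, hRdef]
    nlinarith
  have hcnn : ∀ {ℓ : ℕ}, ℓ ≤ m + n + 1 → 0 ≤ c ℓ := by
    intro ℓ hℓ
    have : (ℓ:ℝ) ≤ (m:ℝ) + n + 1 := by exact_mod_cast hℓ
    simp only [hc, hRdef]
    nlinarith
  have hgap : ∀ {a b : ℕ}, b ≤ a → r + 1 ≤ c b - c (a+1) := by
    intro a b hba
    have : (b:ℝ) ≤ (a:ℝ) := by exact_mod_cast hba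
    simp only [hc]
    push_cast
    nlinarith
  -- uniqueness of positive sets within a colour
  have uniqX : ∀ (i : Fin (m+1)) (x : X), ∀ U ∈ 𝒰 i, ∀ U' ∈ 𝒰 i,
      0 < fns R U x → 0 < fns R U' x → U = U' := by
    intro i x U hU U' hU' h h'
    by_contra hne
    obtain ⟨a, ha, hxa⟩ := exists_near_of_fns_pos hU.2 h
    obtain ⟨a', ha', hxa'⟩ := exists_near_of_fns_pos hU'.2 h'
    have hd := hXdisj i U hU.1 U' hU'.1 hne a ha a' ha'
    have ht : dist a a' ≤ dist a x + dist x a' := dist_triangle a x a'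
    rw [dist_comm a x] at ht
    linarith
  have uniqY : ∀ (j : Fin (n+1)) (y : Y), ∀ V ∈ 𝒱 j, ∀ V' ∈ 𝒱 j,
      0 < fns R V y → 0 < fns R V' y → V = V' := by
    intro j y V hV V' hV' h h'
    by_contra hne
    obtain ⟨a, ha, hya⟩ := exists_near_of_fns_pos hV.2 h
    obtain ⟨a', ha', hya'⟩ := exists_near_of_fns_pos hV'.2 h'
    have hd := hYdisj j V hV.1 V' hV'.1 hne a ha a' ha'
    have ht : dist a a' ≤ dist a y + dist y a' := dist_triangle a y a'
    rw [dist_comm a y] at ht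
    linarith
  set N := m + n with hN
  set 𝒲 : Fin (m + n + 1) → Set (Set (X × Y)) := fun k =>
    { W | ∃ I u J v, W = Ablock R c N 𝒰 𝒱 I u J v ∧ I.Nonempty ∧ J.Nonempty ∧
        (∀ i ∈ I, u i ∈ 𝒰 i) ∧ (∀ j ∈ J, v j ∈ 𝒱 j) ∧
        I.card + J.card = (k : ℕ) + 2 } with h𝒲
  refine ⟨𝒲, max DX DY + 2*R, ?_, ?_, ?_⟩
  · -- coverage
    intro z
    obtain ⟨i₀, U₀, hU₀, hxU₀⟩ := hXcov z.1
    obtain ⟨j₀, V₀, hV₀, hyV₀⟩ := hYcov z.2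
    have hU₀' : U₀ ∈ 𝒰 i₀ := ⟨hU₀, ⟨z.1, hxU₀⟩⟩
    have hV₀' : V₀ ∈ 𝒱 j₀ := ⟨hV₀, ⟨z.2, hyV₀⟩⟩
    have hfU₀ : fns R U₀ z.1 = R := fns_of_mem hRpos.le hxU₀
    have hfV₀ : fns R V₀ z.2 = R := fns_of_mem hRpos.le hyV₀
    have hP1ne : ∀ a : ℕ, a ≤ m + n → ∀ i : Fin (m+1),
        (∃ U ∈ 𝒰 i, c (a+1) < fns R U z.1 ∧ fns R U z.1 < c a) → i ≠ i₀ := by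
      rintro a haN i ⟨U, hU, hlo, hhi⟩ hi
      subst hi
      have hpos : 0 < fns R U z.1 := lt_of_le_of_lt (hcnn (by omega)) hlo
      have hUeq : U = U₀ := uniqX i z.1 U hU U₀ hU₀' hpos (by rw [hfU₀]; exact hRpos)
      rw [hUeq, hfU₀] at hhi
      have := hcR a
      linarith
    have hP2ne : ∀ a : ℕ, a ≤ m + n → ∀ j : Fin (n+1),
        (∃ V ∈ 𝒱 j, c (a+1) < fns R V z.2 ∧ fns R V z.2 < c a) → j ≠ j₀ := by
      rintro a haN j ⟨V, hV, hlo, hhi⟩ hj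
      subst hj
      have hpos : 0 < fns R V z.2 := lt_of_le_of_lt (hcnn (by omega)) hlo
      have hVeq : V = V₀ := uniqY j z.2 V hV V₀ hV₀' hpos (by rw [hfV₀]; exact hRpos)
      rw [hVeq, hfV₀] at hhi
      have := hcR a
      linarith
    have hfree : ∃ ℓ ∈ Finset.range (m+n+1),
        ¬((∃ i, ∃ U ∈ 𝒰 i, c (ℓ+1) < fns R U z.1 ∧ fns R U z.1 < c ℓ) ∨
          (∃ j, ∃ V ∈ 𝒱 j, c (ℓ+1) < fns R V z.2 ∧ fns R V z.2 < c ℓ)) := by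
      by_contra hcon
      push_neg at hcon
      set g : ℕ → Fin (m+1) ⊕ Fin (n+1) := fun a =>
        if h : ∃ i, ∃ U ∈ 𝒰 i, c (a+1) < fns R U z.1 ∧ fns R U z.1 < c a then
          Sum.inl h.choose
        else if h' : ∃ j, ∃ V ∈ 𝒱 j, c (a+1) < fns R V z.2 ∧ fns R V z.2 < c a then
          Sum.inr h'.choose
        else Sum.inl i₀ with hg
      set T : Finset (Fin (m+1) ⊕ Fin (n+1)) :=
        (Finset.univ.erase i₀).disjSum (Finset.univ.erase j₀) with hT
      have hTcard : T.card = m + n := by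
        rw [hT, Finset.card_disjSum, Finset.card_erase_of_mem (Finset.mem_univ _),
          Finset.card_erase_of_mem (Finset.mem_univ _)]
        simp
      have hmaps : ∀ a ∈ Finset.range (m+n+1), g a ∈ T := by
        intro a ha
        rw [Finset.mem_range] at ha
        by_cases h : ∃ i, ∃ U ∈ 𝒰 i, c (a+1) < fns R U z.1 ∧ fns R U z.1 < c a
        · have e : g a = Sum.inl h.choose := by simp only [hg]; rw [dif_pos h]
          rw [e, hT, Finset.inl_mem_disjSum]
          exact Finset.mem_erase.2
            ⟨hP1ne a (by omega) h.choose h.choose_spec, Finset.mem_univ _⟩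
        · rcases hcon a (Finset.mem_range.2 ha) with h1 | h2
          · exact absurd h1 h
          · have e : g a = Sum.inr h2.choose := by
              simp only [hg]; rw [dif_neg h, dif_pos h2]
            rw [e, hT, Finset.inr_mem_disjSum]
            exact Finset.mem_erase.2
              ⟨hP2ne a (by omega) h2.choose h2.choose_spec, Finset.mem_univ _⟩
      have hlt : T.card < (Finset.range (m+n+1)).card := by
        rw [hTcard, Finset.card_range]
        omega
      obtain ⟨a, ha, b, hb, hab, heq⟩ :=
        Finset.exists_ne_map_eq_of_card_lt_of_maps_to hlt hmaps
      have contra : ∀ a b : ℕ, a ∈ Finset.range (m+n+1) → b ∈ Finset.range (m+n+1) →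
          a < b → g a = g b → False := by
        intro a b ha hb hab heq
        rw [Finset.mem_range] at ha hb
        by_cases h1 : ∃ i, ∃ U ∈ 𝒰 i, c (a+1) < fns R U z.1 ∧ fns R U z.1 < c a
        · have e1 : g a = Sum.inl h1.choose := by simp only [hg]; rw [dif_pos h1]
          by_cases h2 : ∃ i, ∃ U ∈ 𝒰 i, c (b+1) < fns R U z.1 ∧ fns R U z.1 < c b
          · have e2 : g b = Sum.inl h2.choose := by simp only [hg]; rw [dif_pos h2]
            rw [e1, e2] at heq
            have hieq : h1.choose = h2.choose := Sum.inl.inj heq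
            obtain ⟨U, hU, hUlo, hUhi⟩ := h1.choose_spec
            obtain ⟨U', hU', hUlo', hUhi'⟩ := h2.choose_spec
            rw [hieq] at hU
            have hp1 : 0 < fns R U z.1 := lt_of_le_of_lt (hcnn (by omega)) hUlo
            have hp2 : 0 < fns R U' z.1 := lt_of_le_of_lt (hcnn (by omega)) hUlo'
            have hUU : U = U' := uniqX _ z.1 U hU U' hU' hp1 hp2
            subst hUU
            have : c b ≤ c (a+1) := hcle (by omega)
            linarith
          · rcases hcon b (Finset.mem_range.2 hb) with hb1 | hb2
            · exact absurd hb1 h2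
            · have e2 : g b = Sum.inr hb2.choose := by
                simp only [hg]; rw [dif_neg h2, dif_pos hb2]
              rw [e1, e2] at heq
              cases heq
        · rcases hcon a (Finset.mem_range.2 ha) with ha1 | ha2
          · exact absurd ha1 h1
          · have e1 : g a = Sum.inr ha2.choose := by
              simp only [hg]; rw [dif_neg h1, dif_pos ha2]
            by_cases h2 : ∃ i, ∃ U ∈ 𝒰 i, c (b+1) < fns R U z.1 ∧ fns R U z.1 < c b
            · have e2 : g b = Sum.inl h2.choose := by simp only [hg]; rw [dif_pos h2]
              rw [e1, e2] at heq
              cases heq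
            · rcases hcon b (Finset.mem_range.2 hb) with hb1 | hb2
              · exact absurd hb1 h2
              · have e2 : g b = Sum.inr hb2.choose := by
                  simp only [hg]; rw [dif_neg h2, dif_pos hb2]
                rw [e1, e2] at heq
                have hjeq : ha2.choose = hb2.choose := Sum.inr.inj heq
                obtain ⟨V, hV, hVlo, hVhi⟩ := ha2.choose_spec
                obtain ⟨V', hV', hVlo', hVhi'⟩ := hb2.choose_spec
                rw [hjeq] at hV
                have hp1 : 0 < fns R V z.2 := lt_of_le_of_lt (hcnn (by omega)) hVlo
                have hp2 : 0 < fns R V' z.2 := lt_of_le_of_lt (hcnn (by omega)) hVlo'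
                have hVV : V = V' := uniqY _ z.2 V hV V' hV' hp1 hp2
                subst hVV
                have : c b ≤ c (a+1) := hcle (by omega)
                linarith
      rcases hab.lt_or_gt with h | h
      · exact contra a b ha hb h heq
      · exact contra b a hb ha h heq.symm
    obtain ⟨ℓ, hℓr, hfreeℓ⟩ := hfree
    push_neg at hfreeℓ
    obtain ⟨hfreeX, hfreeY⟩ := hfreeℓ
    rw [Finset.mem_range] at hℓr
    have hℓN : ℓ ≤ m + n := by omega
    have hcℓR : c ℓ ≤ R := hcR ℓ
    have hcℓpos : 0 < c ℓ := lt_of_lt_of_le (by linarith) (hcpos hℓN)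
    set I : Finset (Fin (m+1)) :=
      Finset.univ.filter (fun i => ∃ U ∈ 𝒰 i, c ℓ ≤ fns R U z.1) with hI
    set u : Fin (m+1) → Set X := fun i =>
      if h : ∃ U ∈ 𝒰 i, c ℓ ≤ fns R U z.1 then h.choose else ∅ with hu
    set J : Finset (Fin (n+1)) :=
      Finset.univ.filter (fun j => ∃ V ∈ 𝒱 j, c ℓ ≤ fns R V z.2) with hJ
    set v : Fin (n+1) → Set Y := fun j =>
      if h : ∃ V ∈ 𝒱 j, c ℓ ≤ fns R V z.2 then h.choose else ∅ with hv
    have hi₀ : i₀ ∈ I := by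
      rw [hI, Finset.mem_filter]
      exact ⟨Finset.mem_univ _, U₀, hU₀', by rw [hfU₀]; exact hcℓR⟩
    have hj₀ : j₀ ∈ J := by
      rw [hJ, Finset.mem_filter]
      exact ⟨Finset.mem_univ _, V₀, hV₀', by rw [hfV₀]; exact hcℓR⟩
    have huI : ∀ i ∈ I, u i ∈ 𝒰 i ∧ c ℓ ≤ fns R (u i) z.1 := by
      intro i hi
      rw [hI, Finset.mem_filter] at hi
      have h := hi.2
      simp only [hu]
      rw [dif_pos h]
      exact h.choose_spec
    have hvJ : ∀ j ∈ J, v j ∈ 𝒱 j ∧ c ℓ ≤ fns R (v j) z.2 := by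
      intro j hj
      rw [hJ, Finset.mem_filter] at hj
      have h := hj.2
      simp only [hv]
      rw [dif_pos h]
      exact h.choose_spec
    have sideX : Side R (c ℓ) (c (ℓ+1)) 𝒰 I u z.1 := by
      constructor
      · intro i hi
        exact (huI i hi).2
      · intro i U hU hgd
        by_contra hgt
        push_neg at hgt
        have hge : c ℓ ≤ fns R U z.1 := hfreeX i U hU hgt
        have hiI : i ∈ I := by
          rw [hI, Finset.mem_filter]
          exact ⟨Finset.mem_univ _, U, hU, hge⟩
        have hsp := huI i hiI
        have hUeq : U = u i := uniqX i z.1 U hU (u i) hsp.1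
          (lt_of_lt_of_le hcℓpos hge) (lt_of_lt_of_le hcℓpos hsp.2)
        exact hgd ⟨hiI, hUeq⟩
    have sideY : Side R (c ℓ) (c (ℓ+1)) 𝒱 J v z.2 := by
      constructor
      · intro j hj
        exact (hvJ j hj).2
      · intro j V hV hgd
        by_contra hgt
        push_neg at hgt
        have hge : c ℓ ≤ fns R V z.2 := hfreeY j V hV hgt
        have hjJ : j ∈ J := by
          rw [hJ, Finset.mem_filter]
          exact ⟨Finset.mem_univ _, V, hV, hge⟩
        have hsp := hvJ j hjJ
        have hVeq : V = v j := uniqY j z.2 V hV (v j) hsp.1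
          (lt_of_lt_of_le hcℓpos hge) (lt_of_lt_of_le hcℓpos hsp.2)
        exact hgd ⟨hjJ, hVeq⟩
    have hIcard : 1 ≤ I.card := Finset.card_pos.2 ⟨i₀, hi₀⟩
    have hJcard : 1 ≤ J.card := Finset.card_pos.2 ⟨j₀, hj₀⟩
    have hIle : I.card ≤ m + 1 := le_trans (Finset.card_le_univ I) (by simp)
    have hJle : J.card ≤ n + 1 := le_trans (Finset.card_le_univ J) (by simp)
    refine ⟨⟨I.card + J.card - 2, by omega⟩, Ablock R c N 𝒰 𝒱 I u J v, ?_,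
      ⟨ℓ, hℓN, sideX, sideY⟩⟩
    simp only [h𝒲, Set.mem_setOf_eq]
    exact ⟨I, u, J, v, rfl, ⟨i₀, hi₀⟩, ⟨j₀, hj₀⟩, fun i hi => (huI i hi).1,
      fun j hj => (hvJ j hj).1, by omega⟩
  · -- disjointness
    intro k W hW W' hW' hne z hz z' hz'
    simp only [h𝒲, Set.mem_setOf_eq] at hW hW'
    obtain ⟨I, u, J, v, rfl, hIne, hJne, hu𝒰, hv𝒱, hcard⟩ := hW
    obtain ⟨I', u', J', v', rfl, hIne', hJne', hu𝒰', hv𝒱', hcard'⟩ := hW'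
    obtain ⟨ℓ, hℓ, hsx, hsy⟩ := hz
    obtain ⟨ℓ', hℓ', hsx', hsy'⟩ := hz'
    have key : ∀ (I : Finset (Fin (m+1))) (u : Fin (m+1) → Set X)
        (J : Finset (Fin (n+1))) (v : Fin (n+1) → Set Y)
        (I' : Finset (Fin (m+1))) (u' : Fin (m+1) → Set X)
        (J' : Finset (Fin (n+1))) (v' : Fin (n+1) → Set Y)
        (a b : ℕ) (p p' : X × Y), b ≤ a →
        (∀ i ∈ I', u' i ∈ 𝒰 i) → (∀ j ∈ J', v' j ∈ 𝒱 j) →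
        I.card + J.card = I'.card + J'.card →
        Ablock R c N 𝒰 𝒱 I u J v ≠ Ablock R c N 𝒰 𝒱 I' u' J' v' →
        Side R (c a) (c (a+1)) 𝒰 I u p.1 → Side R (c a) (c (a+1)) 𝒱 J v p.2 →
        Side R (c b) (c (b+1)) 𝒰 I' u' p'.1 → Side R (c b) (c (b+1)) 𝒱 J' v' p'.2 →
        r < dist p p' := by
      intro I u J v I' u' J' v' a b p p' hba hu' hv' hcards hneq hsxa hsya hsxb hsyb
      have hwit : (∃ i ∈ I', ¬(i ∈ I ∧ u' i = u i)) ∨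
          (∃ j ∈ J', ¬(j ∈ J ∧ v' j = v j)) := by
        by_contra hcon
        push_neg at hcon
        obtain ⟨hA, hB⟩ := hcon
        have hIsub : I' ⊆ I := fun i hi => (hA i hi).1
        have hJsub : J' ⊆ J := fun j hj => (hB j hj).1
        have h1 := Finset.card_le_card hIsub
        have h2 := Finset.card_le_card hJsub
        have hIeq : I' = I := Finset.eq_of_subset_of_card_le hIsub (by omega)
        have hJeq : J' = J := Finset.eq_of_subset_of_card_le hJsub (by omega)
        subst hIeq
        subst hJeq
        exact hneq (ablock_congr (fun i hi => ((hA i hi).2).symm)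
          (fun j hj => ((hB j hj).2).symm))
      have h5 := hgap hba
      rcases hwit with ⟨i, hiI', hneg⟩ | ⟨j, hjJ', hneg⟩
      · have h1 : c b ≤ fns R (u' i) p'.1 := hsxb.1 i hiI'
        have h2 : fns R (u' i) p.1 ≤ c (a+1) := hsxa.2 i (u' i) (hu' i hiI') hneg
        have h3 : fns R (u' i) p'.1 ≤ fns R (u' i) p.1 + dist p.1 p'.1 :=
          fns_le_add_dist R (u' i) p.1 p'.1
        have h4 : dist p.1 p'.1 ≤ dist p p' := by
          rw [Prod.dist_eq]; exact le_max_left _ _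
        linarith
      · have h1 : c b ≤ fns R (v' j) p'.2 := hsyb.1 j hjJ'
        have h2 : fns R (v' j) p.2 ≤ c (a+1) := hsya.2 j (v' j) (hv' j hjJ') hneg
        have h3 : fns R (v' j) p'.2 ≤ fns R (v' j) p.2 + dist p.2 p'.2 :=
          fns_le_add_dist R (v' j) p.2 p'.2
        have h4 : dist p.2 p'.2 ≤ dist p p' := by
          rw [Prod.dist_eq]; exact le_max_right _ _
        linarith
    rcases le_total ℓ' ℓ with hba | hba
    · exact key I u J v I' u' J' v' ℓ ℓ' z z' hba hu𝒰' hv𝒱' (by omega) hne hsx hsy hsx' hsy'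
    · have := key I' u' J' v' I u J v ℓ' ℓ z' z hba hu𝒰 hv𝒱 (by omega) (Ne.symm hne)
        hsx' hsy' hsx hsy
      rwa [dist_comm] at this
  · -- diameter
    intro k W hW z hz z' hz'
    simp only [h𝒲, Set.mem_setOf_eq] at hW
    obtain ⟨I, u, J, v, rfl, hIne, hJne, hu𝒰, hv𝒱, hcard⟩ := hW
    obtain ⟨ℓ, hℓ, hsx, hsy⟩ := hz
    obtain ⟨ℓ2, hℓ2, hsx2, hsy2⟩ := hz'
    obtain ⟨i₁, hi₁⟩ := hIne
    obtain ⟨j₁, hj₁⟩ := hJne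
    have hui : u i₁ ∈ 𝒰 i₁ := hu𝒰 i₁ hi₁
    have hvj : v j₁ ∈ 𝒱 j₁ := hv𝒱 j₁ hj₁
    have hposℓ : 0 < c ℓ := lt_of_lt_of_le (by linarith) (hcpos hℓ)
    have hposℓ2 : 0 < c ℓ2 := lt_of_lt_of_le (by linarith) (hcpos hℓ2)
    obtain ⟨a, ha, hza⟩ := exists_near_of_fns_pos hui.2
      (lt_of_lt_of_le hposℓ (hsx.1 i₁ hi₁))
    obtain ⟨a', ha', hza'⟩ := exists_near_of_fns_pos hui.2
      (lt_of_lt_of_le hposℓ2 (hsx2.1 i₁ hi₁))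
    obtain ⟨b, hb, hzb⟩ := exists_near_of_fns_pos hvj.2
      (lt_of_lt_of_le hposℓ (hsy.1 j₁ hj₁))
    obtain ⟨b', hb', hzb'⟩ := exists_near_of_fns_pos hvj.2
      (lt_of_lt_of_le hposℓ2 (hsy2.1 j₁ hj₁))
    have hdx : dist z.1 z'.1 ≤ DX + 2*R := by
      have htr : dist z.1 z'.1 ≤ dist z.1 a + dist a a' + dist a' z'.1 :=
        dist_triangle4 z.1 a a' z'.1
      have hdaa : dist a a' ≤ DX := hXdiam i₁ (u i₁) hui.1 a ha a' ha'
      have : dist a' z'.1 = dist z'.1 a' := dist_comm _ _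
      linarith
    have hdy : dist z.2 z'.2 ≤ DY + 2*R := by
      have htr : dist z.2 z'.2 ≤ dist z.2 b + dist b b' + dist b' z'.2 :=
        dist_triangle4 z.2 b b' z'.2
      have hdbb : dist b b' ≤ DY := hYdiam j₁ (v j₁) hvj.1 b hb b' hb'
      have : dist b' z'.2 = dist z'.2 b' := dist_comm _ _
      linarith
    rw [Prod.dist_eq]
    have hx1 : DX ≤ max DX DY := le_max_left _ _
    have hy1 : DY ≤ max DX DY := le_max_right _ _
    apply max_le <;> linarith
end

section
/- Let Y be a 1-discrete metric space (d(y,y') ≥ 1 for all distinct y, y' ∈ Y) with asdim Y = n, where n ≥ 1. Then there exist a geodesic metric space X with asdim X = n and an isometric embedding of Y into X. -/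
/-- A metric space is geodesic if every pair of points is joined by an isometrically embedded
segment. -/
def IsGeodesicSpace (X : Type*) [MetricSpace X] : Prop :=
  ∀ x y : X, ∃ γ : ℝ → X, γ 0 = x ∧ γ (dist x y) = y ∧
    ∀ s ∈ Set.Icc (0 : ℝ) (dist x y), ∀ t ∈ Set.Icc (0 : ℝ) (dist x y),
      dist (γ s) (γ t) = |s - t|

universe u

namespace MGaux

open Set Sum

attribute [local instance] Classical.propDecidable

variable {Y : Type u} [MetricSpace Y]

def Edge (Y : Type u) [MetricSpace Y] : Type u :=
  {p : Y × Y × ℝ // WellOrderingRel p.1 p.2.1 ∧ 0 < p.2.2 ∧ p.2.2 < dist p.1 p.2.1}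

abbrev X (Y : Type u) [MetricSpace Y] : Type u := Y ⊕ Edge Y

def A : X Y → Y
  | .inl y => y
  | .inr e => e.1.1

def B : X Y → Y
  | .inl y => y
  | .inr e => e.1.2.1

def S : X Y → ℝ
  | .inl _ => 0
  | .inr e => e.1.2.2

noncomputable def L (p : X Y) : ℝ := dist (A p) (B p)

@[simp] lemma A_inl (y : Y) : A (Sum.inl y : X Y) = y := rfl
@[simp] lemma B_inl (y : Y) : B (Sum.inl y : X Y) = y := rfl
@[simp] lemma S_inl (y : Y) : S (Sum.inl y : X Y) = 0 := rfl
@[simp] lemma L_inl (y : Y) : L (Sum.inl y : X Y) = 0 := by simp [L]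

lemma S_nonneg (p : X Y) : 0 ≤ S p := by
  cases p with
  | inl y => simp
  | inr e => exact le_of_lt e.2.2.1

lemma S_le (p : X Y) : S p ≤ L p := by
  cases p with
  | inl y => simp
  | inr e => exact le_of_lt e.2.2.2

lemma L_nonneg (p : X Y) : 0 ≤ L p := dist_nonneg

lemma A_ne_B_of_inr (e : Edge Y) : A (Sum.inr e : X Y) ≠ B (Sum.inr e : X Y) := by
  have h : 0 < dist e.1.1 e.1.2.1 := lt_trans e.2.2.1 e.2.2.2
  exact fun hc => by rw [A, B] at hc; exact (dist_pos.mp h) hc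

lemma ext_ABS {p q : X Y} (hA : A p = A q) (hB : B p = B q) (hS : S p = S q) : p = q := by
  cases p with
  | inl y =>
    cases q with
    | inl z => simp only [A_inl] at hA; rw [hA]
    | inr e =>
      exfalso
      exact A_ne_B_of_inr e (by rw [← hA, ← hB]; rfl)
  | inr e =>
    cases q with
    | inl z =>
      exfalso
      exact A_ne_B_of_inr e (by rw [hA, hB]; rfl)
    | inr e' =>
      congr 1
      apply Subtype.ext
      have h1 : e.1.1 = e'.1.1 := hA
      have h2 : e.1.2.1 = e'.1.2.1 := hB
      have h3 : e.1.2.2 = e'.1.2.2 := hS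
      exact Prod.ext h1 (Prod.ext h2 h3)

noncomputable def del (p : X Y) (z : Y) : ℝ :=
  min (S p + dist (A p) z) ((L p - S p) + dist (B p) z)

noncomputable def R (p q : X Y) : ℝ :=
  min (del p (A q) + S q) (del p (B q) + (L q - S q))

def SameEdge (p q : X Y) : Prop := A p = A q ∧ B p = B q

noncomputable def d (p q : X Y) : ℝ := if SameEdge p q then |S p - S q| else R p q

lemma L_eq_of_sameEdge {p q : X Y} (h : SameEdge p q) : L p = L q := by
  rw [L, L, h.1, h.2]

lemma del_nonneg (p : X Y) (z : Y) : 0 ≤ del p z := by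
  have h1 := S_nonneg p; have h2 := S_le p
  have h3 : (0:ℝ) ≤ dist (A p) z := dist_nonneg
  have h4 : (0:ℝ) ≤ dist (B p) z := dist_nonneg
  exact le_min (by linarith) (by linarith)

lemma R_nonneg (p q : X Y) : 0 ≤ R p q := by
  have h1 := S_nonneg q; have h2 := S_le q
  have := del_nonneg p (A q); have := del_nonneg p (B q)
  exact le_min (by linarith) (by linarith)

lemma del_le (p : X Y) (z w : Y) : del p z ≤ del p w + dist w z := by
  rw [del, del, ← min_add_add_right]
  refine min_le_min ?_ ?_
  · have := dist_triangle (A p) w z; linarith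
  · have := dist_triangle (B p) w z; linarith

@[simp] lemma del_inl (y z : Y) : del (Sum.inl y : X Y) z = dist y z := by
  simp [del]

lemma del_A (p : X Y) : del p (A p) = S p := by
  rw [del]
  have h1 : dist (B p) (A p) = L p := by rw [L, dist_comm]
  rw [dist_self, h1, add_zero]
  have := S_le p
  exact min_eq_left (by linarith)

lemma del_B (p : X Y) : del p (B p) = L p - S p := by
  rw [del]
  have h1 : dist (A p) (B p) = L p := rfl
  rw [dist_self, h1, add_zero]
  have := S_nonneg p
  exact min_eq_right (by linarith)

lemma min_le_del (p : X Y) (z : Y) : min (S p) (L p - S p) ≤ del p z := by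
  refine le_min ?_ ?_
  · have : (0:ℝ) ≤ dist (A p) z := dist_nonneg
    have := min_le_left (S p) (L p - S p); linarith
  · have : (0:ℝ) ≤ dist (B p) z := dist_nonneg
    have := min_le_right (S p) (L p - S p); linarith

lemma R_eq4 (p q : X Y) : R p q =
    min (min (S p + dist (A p) (A q) + S q) ((L p - S p) + dist (B p) (A q) + S q))
      (min (S p + dist (A p) (B q) + (L q - S q)) ((L p - S p) + dist (B p) (B q) + (L q - S q))) := by
  rw [R, del, del, ← min_add_add_right, ← min_add_add_right]

lemma R_comm (p q : X Y) : R p q = R q p := by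
  rw [R_eq4, R_eq4, min_min_min_comm]
  congr 1
  · congr 1
    · rw [dist_comm]; ring
    · rw [dist_comm]; ring
  · congr 1
    · rw [dist_comm]; ring
    · rw [dist_comm]; ring

lemma sameEdge_refl (p : X Y) : SameEdge p p := ⟨rfl, rfl⟩

lemma sameEdge_symm {p q : X Y} (h : SameEdge p q) : SameEdge q p := ⟨h.1.symm, h.2.symm⟩

lemma sameEdge_trans {p q r : X Y} (h : SameEdge p q) (h' : SameEdge q r) : SameEdge p r :=
  ⟨h.1.trans h'.1, h.2.trans h'.2⟩

lemma d_self (p : X Y) : d p p = 0 := by simp [d, sameEdge_refl]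

lemma d_comm (p q : X Y) : d p q = d q p := by
  by_cases h : SameEdge p q
  · rw [d, d, if_pos h, if_pos (sameEdge_symm h), abs_sub_comm]
  · rw [d, d, if_neg h, if_neg (fun h' => h (sameEdge_symm h')), R_comm]

lemma eq_inl_of_S_eq {p : X Y} (h : S p = 0) : p = Sum.inl (A p) := by
  cases p with
  | inl y => rfl
  | inr e => exact absurd h (ne_of_gt e.2.2.1)

lemma eq_inl_of_LS_eq {p : X Y} (h : L p - S p = 0) : p = Sum.inl (B p) := by
  cases p with
  | inl y => rfl
  | inr e =>
    exfalso
    have h2 := e.2.2.2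
    have h3 : L (Sum.inr e : X Y) = dist e.1.1 e.1.2.1 := rfl
    have h4 : S (Sum.inr e : X Y) = e.1.2.2 := rfl
    rw [h3, h4] at h; linarith

lemma d_eq_zero {p q : X Y} (h : d p q = 0) : p = q := by
  by_cases hs : SameEdge p q
  · rw [d, if_pos hs] at h
    exact ext_ABS hs.1 hs.2 (by have := abs_eq_zero.mp h; linarith)
  · exfalso
    rw [d, if_neg hs] at h
    rw [R_eq4] at h
    have hSp := S_nonneg p; have hSq := S_nonneg q
    have hLp := S_le p; have hLq := S_le q
    have dAA : (0:ℝ) ≤ dist (A p) (A q) := dist_nonneg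
    have dBA : (0:ℝ) ≤ dist (B p) (A q) := dist_nonneg
    have dAB : (0:ℝ) ≤ dist (A p) (B q) := dist_nonneg
    have dBB : (0:ℝ) ≤ dist (B p) (B q) := dist_nonneg
    apply hs
    rcases min_cases (min (S p + dist (A p) (A q) + S q) (L p - S p + dist (B p) (A q) + S q))
      (min (S p + dist (A p) (B q) + (L q - S q)) (L p - S p + dist (B p) (B q) + (L q - S q))) with
      ⟨he, _⟩ | ⟨he, _⟩ <;> rw [he] at h
    · rcases min_cases (S p + dist (A p) (A q) + S q) (L p - S p + dist (B p) (A q) + S q) with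
        ⟨he2, _⟩ | ⟨he2, _⟩ <;> rw [he2] at h
      · have h1 : S p = 0 := by linarith
        have h2 : S q = 0 := by linarith
        have h3 : A p = A q := dist_eq_zero.mp (by linarith)
        rw [eq_inl_of_S_eq h1, eq_inl_of_S_eq h2, h3]; exact sameEdge_refl _
      · have h1 : L p - S p = 0 := by linarith
        have h2 : S q = 0 := by linarith
        have h3 : B p = A q := dist_eq_zero.mp (by linarith)
        rw [eq_inl_of_LS_eq h1, eq_inl_of_S_eq h2, h3]; exact sameEdge_refl _
    · rcases min_cases (S p + dist (A p) (B q) + (L q - S q)) (L p - S p + dist (B p) (B q) + (L q - S q)) with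
        ⟨he2, _⟩ | ⟨he2, _⟩ <;> rw [he2] at h
      · have h1 : S p = 0 := by linarith
        have h2 : L q - S q = 0 := by linarith
        have h3 : A p = B q := dist_eq_zero.mp (by linarith)
        rw [eq_inl_of_S_eq h1, eq_inl_of_LS_eq h2, h3]; exact sameEdge_refl _
      · have h1 : L p - S p = 0 := by linarith
        have h2 : L q - S q = 0 := by linarith
        have h3 : B p = B q := dist_eq_zero.mp (by linarith)
        rw [eq_inl_of_LS_eq h1, eq_inl_of_LS_eq h2, h3]; exact sameEdge_refl _

lemma d_of_same {p q : X Y} (h : SameEdge p q) : d p q = |S p - S q| := by rw [d, if_pos h]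

lemma d_of_ne {p q : X Y} (h : ¬ SameEdge p q) : d p q = R p q := by rw [d, if_neg h]

lemma d_le_del_add (p r : X Y) (z : Y) : d p r ≤ del p z + del r z := by
  by_cases hs : SameEdge p r
  · rw [d_of_same hs]
    have hA : A r = A p := hs.1.symm
    have hB : B r = B p := hs.2.symm
    have hL : L r = L p := (L_eq_of_sameEdge hs).symm
    have htri := dist_triangle (A p) z (B p)
    have hzB : dist z (B p) = dist (B p) z := dist_comm _ _
    have hLdef : L p = dist (A p) (B p) := rfl
    have hSp := S_nonneg p; have hSr := S_nonneg r
    have hSlp := S_le p; have hSlr := S_le r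
    rw [hL] at hSlr
    have hdA : (0:ℝ) ≤ dist (A p) z := dist_nonneg
    have hdB : (0:ℝ) ≤ dist (B p) z := dist_nonneg
    rw [del, del, hA, hB, hL]
    rcases min_cases (S p + dist (A p) z) (L p - S p + dist (B p) z) with ⟨h1, _⟩ | ⟨h1, _⟩ <;>
      rcases min_cases (S r + dist (A p) z) (L p - S r + dist (B p) z) with ⟨h2, _⟩ | ⟨h2, _⟩ <;>
      rw [h1, h2, abs_sub_le_iff] <;> exact ⟨by linarith, by linarith⟩
  · rw [d_of_ne hs]
    have hRdef : R p r = min (del p (A r) + S r) (del p (B r) + (L r - S r)) := rfl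
    have hdel : del r z = min (S r + dist (A r) z) ((L r - S r) + dist (B r) z) := rfl
    rcases min_cases (S r + dist (A r) z) ((L r - S r) + dist (B r) z) with ⟨h2, _⟩ | ⟨h2, _⟩
    · rw [hdel, h2]
      have h3 : R p r ≤ del p (A r) + S r := hRdef ▸ min_le_left _ _
      have h4 := del_le p (A r) z
      have h5 : dist z (A r) = dist (A r) z := dist_comm _ _
      linarith
    · rw [hdel, h2]
      have h3 : R p r ≤ del p (B r) + (L r - S r) := hRdef ▸ min_le_right _ _
      have h4 := del_le p (B r) z
      have h5 : dist z (B r) = dist (B r) z := dist_comm _ _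
      linarith

lemma tri_aux {p q r : X Y} (hpq : SameEdge p q) (hqr : ¬ SameEdge q r) :
    d p r ≤ d p q + d q r := by
  have hpr : ¬ SameEdge p r := fun h => hqr (sameEdge_trans (sameEdge_symm hpq) h)
  rw [d_of_same hpq, d_of_ne hqr, d_of_ne hpr]
  rw [R_comm p r, R_comm q r]
  have hL : L p = L q := L_eq_of_sameEdge hpq
  have h1 : R r p ≤ del r (A p) + S p := min_le_left _ _
  have h2 : R r p ≤ del r (B p) + (L p - S p) := min_le_right _ _
  have ha := le_abs_self (S p - S q)
  have hb := neg_abs_le (S p - S q)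
  have hRrq : R r q = min (del r (A q) + S q) (del r (B q) + (L q - S q)) := rfl
  rcases min_cases (del r (A q) + S q) (del r (B q) + (L q - S q)) with ⟨he, _⟩ | ⟨he, _⟩ <;>
    rw [hRrq, he]
  · rw [← hpq.1]; linarith
  · rw [← hpq.2, ← hL]; linarith

lemma d_triangle (p q r : X Y) : d p r ≤ d p q + d q r := by
  by_cases hpq : SameEdge p q <;> by_cases hqr : SameEdge q r
  · have hpr := sameEdge_trans hpq hqr
    rw [d_of_same hpq, d_of_same hqr, d_of_same hpr]
    exact abs_sub_le _ _ _
  · exact tri_aux hpq hqr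
  · rw [d_comm p r, d_comm p q, d_comm q r, add_comm]
    exact tri_aux (sameEdge_symm hqr) (fun h => hpq (sameEdge_symm h))
  · rw [d_of_ne hpq, d_of_ne hqr]
    have hRpq : R p q = min (del p (A q) + S q) (del p (B q) + (L q - S q)) := rfl
    have hRqr : R q r = R r q := R_comm q r
    have hRrq : R r q = min (del r (A q) + S q) (del r (B q) + (L q - S q)) := rfl
    have hBA : dist (B q) (A q) = L q := by rw [L, dist_comm]
    have hAB : dist (A q) (B q) = L q := rfl
    have hSq := S_nonneg q; have hSlq := S_le q
    rcases min_cases (del p (A q) + S q) (del p (B q) + (L q - S q)) with ⟨h1, _⟩ | ⟨h1, _⟩ <;>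
      rcases min_cases (del r (A q) + S q) (del r (B q) + (L q - S q)) with ⟨h2, _⟩ | ⟨h2, _⟩ <;>
      rw [hRpq, h1, hRqr, hRrq, h2]
    · have h3 := d_le_del_add p r (A q)
      linarith
    · have h3 := d_le_del_add p r (A q)
      have h4 := del_le r (A q) (B q)
      linarith
    · have h3 := d_le_del_add p r (B q)
      have h4 := del_le r (B q) (A q)
      rw [hAB] at h4
      linarith
    · have h3 := d_le_del_add p r (B q)
      linarith

noncomputable instance : MetricSpace (X Y) where
  dist := d
  dist_self := d_self
  dist_comm := d_comm
  dist_triangle := d_triangle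
  eq_of_dist_eq_zero := d_eq_zero

lemma dist_def (p q : X Y) : dist p q = d p q := rfl

@[simp] lemma A_inr (e : Edge Y) : A (Sum.inr e : X Y) = e.1.1 := rfl
@[simp] lemma B_inr (e : Edge Y) : B (Sum.inr e : X Y) = e.1.2.1 := rfl
@[simp] lemma S_inr (e : Edge Y) : S (Sum.inr e : X Y) = e.1.2.2 := rfl
@[simp] lemma L_inr (e : Edge Y) : L (Sum.inr e : X Y) = dist e.1.1 e.1.2.1 := rfl

lemma d_inl (p : X Y) (z : Y) : d p (Sum.inl z) = del p z := by
  by_cases h : SameEdge p (Sum.inl z)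
  · cases p with
    | inl y =>
      have hyz : y = z := h.1
      subst hyz
      rw [d_of_same h]; simp
    | inr e => exact absurd (h.1.trans h.2.symm) (A_ne_B_of_inr e)
  · rw [d_of_ne h]
    have hR : R p (Sum.inl z) = min (del p z + 0) (del p z + (dist z z - 0)) := rfl
    rw [hR]; simp

lemma dist_inl (p : X Y) (z : Y) : dist p (Sum.inl z) = del p z := d_inl p z

noncomputable instance : MetricSpace (Y ⊕ Edge Y) := (inferInstance : MetricSpace (X Y))

lemma dist_inl_inl (y z : Y) : @dist (X Y) _ (Sum.inl y : X Y) (Sum.inl z) = dist y z := by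
  rw [dist_inl, del_inl]

noncomputable def onEdge (a b : Y) (x : ℝ) : X Y :=
  if hx : x ≤ 0 then Sum.inl a
  else if hxL : dist a b ≤ x then Sum.inl b
  else if h : WellOrderingRel a b then
    Sum.inr ⟨(a, b, x), h, lt_of_not_ge hx, lt_of_not_ge hxL⟩
  else
    Sum.inr ⟨(b, a, dist a b - x), by
      have hx0 : 0 < x := lt_of_not_ge hx
      have hxd : x < dist a b := lt_of_not_ge hxL
      have hab : a ≠ b := by
        intro e; subst e; rw [dist_self] at hxd; linarith
      have hba : WellOrderingRel b a := by
        rcases trichotomous_of WellOrderingRel a b with h1 | h1 | h1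
        · exact absurd h1 h
        · exact absurd h1 hab
        · exact h1
      refine ⟨hba, ?_, ?_⟩
      · show (0:ℝ) < dist a b - x
        linarith
      · show dist a b - x < dist b a
        rw [dist_comm b a]; linarith⟩

lemma onEdge_of_nonpos {a b : Y} {x : ℝ} (hx : x ≤ 0) : onEdge a b x = Sum.inl a := by
  unfold onEdge; rw [dif_pos hx]

lemma onEdge_of_ge {a b : Y} {x : ℝ} (h : dist a b ≤ x) : onEdge a b x = Sum.inl b := by
  by_cases hx : x ≤ 0
  · have h0 : dist a b = 0 := le_antisymm (le_trans h hx) dist_nonneg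
    have hab : a = b := dist_eq_zero.mp h0
    rw [onEdge_of_nonpos hx, hab]
  · unfold onEdge; rw [dif_neg hx, dif_pos h]

lemma onEdge_rep (p : X Y) : onEdge (A p) (B p) (S p) = p := by
  cases p with
  | inl y => exact onEdge_of_nonpos le_rfl
  | inr e =>
    have h1 : ¬ (S (Sum.inr e : X Y) ≤ 0) := not_le.mpr e.2.2.1
    have h2 : ¬ (dist (A (Sum.inr e : X Y)) (B (Sum.inr e : X Y)) ≤ S (Sum.inr e : X Y)) :=
      not_le.mpr e.2.2.2
    unfold onEdge
    rw [dif_neg h1, dif_neg h2,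
      dif_pos (show WellOrderingRel (A (Sum.inr e : X Y)) (B (Sum.inr e : X Y)) from e.2.1)]
    rfl

lemma del_onEdge {a b : Y} {x : ℝ} (h0 : 0 ≤ x) (hL : x ≤ dist a b) (z : Y) :
    del (onEdge a b x) z = min (x + dist a z) ((dist a b - x) + dist b z) := by
  by_cases hx : x ≤ 0
  · have hx0 : x = 0 := le_antisymm hx h0
    subst hx0
    rw [onEdge_of_nonpos le_rfl, del_inl]
    simp only [zero_add, sub_zero]
    exact (min_eq_left (dist_triangle a b z)).symm
  · by_cases hxL : dist a b ≤ x
    · have hx2 : x = dist a b := le_antisymm hL hxL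
      rw [onEdge_of_ge hxL, del_inl, hx2]
      simp only [sub_self, zero_add]
      refine (min_eq_right ?_).symm
      have := dist_triangle b a z
      rw [dist_comm b a] at this
      linarith
    · by_cases h : WellOrderingRel a b
      · unfold onEdge
        rw [dif_neg hx, dif_neg hxL, dif_pos h]
        rfl
      · unfold onEdge
        rw [dif_neg hx, dif_neg hxL, dif_neg h]
        show min ((dist a b - x) + dist b z) ((dist b a - (dist a b - x)) + dist a z) = _
        rw [min_comm]
        congr 1
        rw [dist_comm b a]
        ring

lemma d_inr (e e' : Edge Y) (h1 : e.1.1 = e'.1.1) (h2 : e.1.2.1 = e'.1.2.1) :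
    d (Sum.inr e : X Y) (Sum.inr e') = |e.1.2.2 - e'.1.2.2| := d_of_same ⟨h1, h2⟩

lemma dist_onEdge_left (a b : Y) {x' : ℝ} (h0' : 0 ≤ x') (hL' : x' ≤ dist a b) :
    @dist (X Y) _ (Sum.inl a : X Y) (onEdge a b x') = x' := by
  rw [dist_def, d_comm, d_inl, del_onEdge h0' hL']
  rw [dist_self, add_zero, dist_comm b a]
  exact min_eq_left (by linarith)

lemma dist_onEdge_right (a b : Y) {x' : ℝ} (h0' : 0 ≤ x') (hL' : x' ≤ dist a b) :
    @dist (X Y) _ (Sum.inl b : X Y) (onEdge a b x') = dist a b - x' := by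
  rw [dist_def, d_comm, d_inl, del_onEdge h0' hL']
  rw [dist_self, add_zero]
  have hd : (0:ℝ) ≤ dist a b := dist_nonneg
  exact min_eq_right (by linarith)

lemma dist_onEdge (a b : Y) {x x' : ℝ} (h0 : 0 ≤ x) (hL : x ≤ dist a b)
    (h0' : 0 ≤ x') (hL' : x' ≤ dist a b) :
    dist (onEdge a b x) (onEdge a b x') = |x - x'| := by
  by_cases hx : x ≤ 0
  · have hx0 : x = 0 := le_antisymm hx h0
    subst hx0
    rw [onEdge_of_nonpos le_rfl, dist_onEdge_left a b h0' hL', zero_sub, abs_neg,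
      abs_of_nonneg h0']
  · by_cases hxL : dist a b ≤ x
    · have hx2 : x = dist a b := le_antisymm hL hxL
      rw [onEdge_of_ge hxL, dist_onEdge_right a b h0' hL', hx2]
      exact (abs_of_nonneg (by linarith)).symm
    · by_cases hx' : x' ≤ 0
      · have hx0 : x' = 0 := le_antisymm hx' h0'
        subst hx0
        rw [onEdge_of_nonpos le_rfl, dist_comm, dist_onEdge_left a b h0 hL, sub_zero,
          abs_of_nonneg h0]
      · by_cases hxL' : dist a b ≤ x'
        · have hx2 : x' = dist a b := le_antisymm hL' hxL'
          rw [onEdge_of_ge hxL', dist_comm, dist_onEdge_right a b h0 hL, hx2, abs_sub_comm]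
          exact (abs_of_nonneg (by linarith)).symm
        · by_cases h : WellOrderingRel a b
          · rw [dist_def]
            unfold onEdge
            rw [dif_neg hx, dif_neg hxL, dif_pos h, dif_neg hx', dif_neg hxL', dif_pos h]
            exact d_inr _ _ rfl rfl
          · rw [dist_def]
            unfold onEdge
            rw [dif_neg hx, dif_neg hxL, dif_neg h, dif_neg hx', dif_neg hxL', dif_neg h]
            rw [show |x - x'| = |(dist a b - x) - (dist a b - x')| by
              rw [show (dist a b - x) - (dist a b - x') = -(x - x') by ring, abs_neg]]
            exact d_inr _ _ rfl rfl

def Geod {Z : Type*} [MetricSpace Z] (γ : ℝ → Z) (c : ℝ) : Prop :=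
  ∀ s ∈ Set.Icc (0:ℝ) c, ∀ t ∈ Set.Icc (0:ℝ) c, dist (γ s) (γ t) = |s - t|

lemma glue {Z : Type*} [MetricSpace Z] {γ1 γ2 : ℝ → Z} {d1 d2 : ℝ} (h1 : 0 ≤ d1) (h2 : 0 ≤ d2)
    (hm : γ1 d1 = γ2 0) (hsum : dist (γ1 0) (γ2 d2) = d1 + d2)
    (g1 : Geod γ1 d1) (g2 : Geod γ2 d2) :
    ∃ γ : ℝ → Z, γ 0 = γ1 0 ∧ γ (d1 + d2) = γ2 d2 ∧ Geod γ (d1 + d2) := by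
  refine ⟨fun u => if u ≤ d1 then γ1 u else γ2 (u - d1), ?_, ?_, ?_⟩
  · simp [h1]
  · by_cases hd : d1 + d2 ≤ d1
    · have hd2 : d2 = 0 := le_antisymm (by linarith) h2
      simp only [if_pos hd]
      rw [show d1 + d2 = d1 by rw [hd2]; ring, hm, hd2]
    · simp only [if_neg hd]
      congr 1; ring
  · have key : ∀ s ∈ Set.Icc (0:ℝ) (d1+d2), ∀ t ∈ Set.Icc (0:ℝ) (d1+d2), s ≤ t →
        dist ((fun u => if u ≤ d1 then γ1 u else γ2 (u - d1)) s)
          ((fun u => if u ≤ d1 then γ1 u else γ2 (u - d1)) t) = |s - t| := by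
      intro s hs t ht hst
      simp only
      by_cases hs1 : s ≤ d1
      · by_cases ht1 : t ≤ d1
        · rw [if_pos hs1, if_pos ht1]
          exact g1 s ⟨hs.1, hs1⟩ t ⟨ht.1, ht1⟩
        · rw [if_pos hs1, if_neg ht1]
          push_neg at ht1
          have htd1 : (0:ℝ) ≤ t - d1 := by linarith
          have htd2 : t - d1 ≤ d2 := by linarith [ht.2]
          have e0 : dist (γ1 s) (γ1 d1) = d1 - s := by
            rw [g1 s ⟨hs.1, hs1⟩ d1 ⟨h1, le_rfl⟩, abs_of_nonpos (by linarith)]; ring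
          have e1 : dist (γ2 0) (γ2 (t - d1)) = t - d1 := by
            rw [g2 0 ⟨le_rfl, h2⟩ (t - d1) ⟨htd1, htd2⟩, zero_sub, abs_neg,
              abs_of_nonneg htd1]
          have up : dist (γ1 s) (γ2 (t - d1)) ≤ t - s := by
            have htr := dist_triangle (γ1 s) (γ1 d1) (γ2 (t - d1))
            rw [e0, hm, e1] at htr
            linarith
          have e2 : dist (γ1 0) (γ1 s) = s := by
            rw [g1 0 ⟨le_rfl, h1⟩ s ⟨hs.1, hs1⟩, zero_sub, abs_neg, abs_of_nonneg hs.1]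
          have e3 : dist (γ2 (t - d1)) (γ2 d2) = d2 - (t - d1) := by
            rw [g2 (t - d1) ⟨htd1, htd2⟩ d2 ⟨h2, le_rfl⟩, abs_of_nonpos (by linarith)]; ring
          have lo := dist_triangle4 (γ1 0) (γ1 s) (γ2 (t - d1)) (γ2 d2)
          rw [hsum, e2, e3] at lo
          rw [abs_of_nonpos (by linarith)]
          linarith
      · push_neg at hs1
        have ht1 : ¬ t ≤ d1 := by push_neg; linarith
        rw [if_neg (not_le.mpr hs1), if_neg ht1]
        rw [g2 (s - d1) ⟨by linarith, by linarith [hs.2]⟩ (t - d1)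
          ⟨by linarith, by linarith [ht.2]⟩]
        congr 1; ring
    intro s hs t ht
    rcases le_total s t with hst | hst
    · exact key s hs t ht hst
    · rw [dist_comm, abs_sub_comm]
      exact key t ht s hs hst

lemma dist_to_A (p : X Y) : dist p (Sum.inl (A p)) = S p := by rw [dist_inl, del_A]

lemma dist_to_B (p : X Y) : dist p (Sum.inl (B p)) = L p - S p := by rw [dist_inl, del_B]

lemma hLpd (p : X Y) : L p = dist (A p) (B p) := rfl

lemma geodA (p : X Y) :
    (fun u => onEdge (A p) (B p) (S p - u)) 0 = p ∧
    (fun u => onEdge (A p) (B p) (S p - u)) (S p) = Sum.inl (A p) ∧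
    Geod (fun u => onEdge (A p) (B p) (S p - u)) (S p) := by
  have hSl := S_le p; have hS0 := S_nonneg p
  have hLd := hLpd p
  refine ⟨?_, ?_, ?_⟩
  · simp only [sub_zero]; exact onEdge_rep p
  · simp only [sub_self]; exact onEdge_of_nonpos le_rfl
  · intro s hs t ht
    simp only
    rw [dist_onEdge (A p) (B p) (by linarith [hs.2]) (by linarith [hs.1])
      (by linarith [ht.2]) (by linarith [ht.1])]
    rw [show (S p - s) - (S p - t) = -(s - t) by ring, abs_neg]

lemma geodB (p : X Y) :
    (fun u => onEdge (A p) (B p) (S p + u)) 0 = p ∧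
    (fun u => onEdge (A p) (B p) (S p + u)) (L p - S p) = Sum.inl (B p) ∧
    Geod (fun u => onEdge (A p) (B p) (S p + u)) (L p - S p) := by
  have hSl := S_le p; have hS0 := S_nonneg p
  have hLd := hLpd p
  refine ⟨?_, ?_, ?_⟩
  · simp only [add_zero]; exact onEdge_rep p
  · exact onEdge_of_ge (by linarith)
  · intro s hs t ht
    simp only
    rw [dist_onEdge (A p) (B p) (by linarith [hs.1]) (by linarith [hs.2])
      (by linarith [ht.1]) (by linarith [ht.2])]
    rw [show (S p + s) - (S p + t) = s - t by ring]

lemma geod_to_vertex (p : X Y) (z : Y) :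
    ∃ γ : ℝ → X Y, γ 0 = p ∧ γ (dist p (Sum.inl z)) = Sum.inl z ∧
      Geod γ (dist p (Sum.inl z)) := by
  have hdel : dist p (Sum.inl z) = del p z := dist_inl p z
  rcases min_cases (S p + dist (A p) z) ((L p - S p) + dist (B p) z) with ⟨he, _⟩ | ⟨he, _⟩
  · have hdz : dist p (Sum.inl z) = S p + dist (A p) z := by rw [hdel]; exact he
    obtain ⟨ga0, gaE, gag⟩ := geodA p
    have hedge : Geod (fun u => onEdge (A p) z u) (dist (A p) z) := by
      intro s hs t ht; exact dist_onEdge _ _ hs.1 hs.2 ht.1 ht.2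
    have hm : (fun u => onEdge (A p) (B p) (S p - u)) (S p) = (fun u => onEdge (A p) z u) 0 := by
      rw [gaE]; simp only
      exact (onEdge_of_nonpos le_rfl).symm
    have hsum : dist ((fun u => onEdge (A p) (B p) (S p - u)) 0)
        ((fun u => onEdge (A p) z u) (dist (A p) z)) = S p + dist (A p) z := by
      rw [ga0]; simp only
      rw [onEdge_of_ge le_rfl, dist_inl]
      exact he
    obtain ⟨γ, hγ0, hγE, hγg⟩ := glue (γ1 := fun u => onEdge (A p) (B p) (S p - u))
      (γ2 := fun u => onEdge (A p) z u) (d1 := S p) (d2 := dist (A p) z)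
      (S_nonneg p) dist_nonneg hm hsum gag hedge
    refine ⟨γ, ?_, ?_, ?_⟩
    · rw [hγ0]; exact ga0
    · rw [hdz, hγE]
      exact onEdge_of_ge le_rfl
    · rw [hdz]; exact hγg
  · have hdz : dist p (Sum.inl z) = (L p - S p) + dist (B p) z := by rw [hdel]; exact he
    obtain ⟨gb0, gbE, gbg⟩ := geodB p
    have hedge : Geod (fun u => onEdge (B p) z u) (dist (B p) z) := by
      intro s hs t ht; exact dist_onEdge _ _ hs.1 hs.2 ht.1 ht.2
    have hm : (fun u => onEdge (A p) (B p) (S p + u)) (L p - S p)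
        = (fun u => onEdge (B p) z u) 0 := by
      rw [gbE]; simp only
      exact (onEdge_of_nonpos le_rfl).symm
    have hsum : dist ((fun u => onEdge (A p) (B p) (S p + u)) 0)
        ((fun u => onEdge (B p) z u) (dist (B p) z)) = (L p - S p) + dist (B p) z := by
      rw [gb0]; simp only
      rw [onEdge_of_ge le_rfl, dist_inl]
      exact he
    obtain ⟨γ, hγ0, hγE, hγg⟩ := glue (γ1 := fun u => onEdge (A p) (B p) (S p + u))
      (γ2 := fun u => onEdge (B p) z u) (d1 := L p - S p) (d2 := dist (B p) z)
      (by linarith [S_le p]) dist_nonneg hm hsum gbg hedge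
    refine ⟨γ, ?_, ?_, ?_⟩
    · rw [hγ0]; exact gb0
    · rw [hdz, hγE]
      exact onEdge_of_ge le_rfl
    · rw [hdz]; exact hγg

lemma isGeodesic : IsGeodesicSpace (X Y) := by
  intro p q
  by_cases hpq : SameEdge p q
  · by_cases hS : S p = S q
    · have hpq2 : p = q := ext_ABS hpq.1 hpq.2 hS
      subst hpq2
      refine ⟨fun _ => p, rfl, rfl, ?_⟩
      intro s hs t ht
      rw [dist_self] at hs ht
      have hs0 : s = 0 := le_antisymm hs.2 hs.1
      have ht0 : t = 0 := le_antisymm ht.2 ht.1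
      subst hs0; subst ht0
      simp [dist_self]
    · have hd : dist p q = |S p - S q| := d_of_same hpq
      have hLL : L p = L q := L_eq_of_sameEdge hpq
      have hLpq : L p = dist (A p) (B p) := rfl
      have hSl := S_le p; have hS0 := S_nonneg p
      have hSl' := S_le q; have hS0' := S_nonneg q
      rcases le_total (S p) (S q) with hle | hle
      · have hd2 : dist p q = S q - S p := by
          rw [hd, abs_of_nonpos (by linarith)]; ring
        refine ⟨fun u => onEdge (A p) (B p) (S p + u), ?_, ?_, ?_⟩
        · simp only [add_zero]; exact onEdge_rep p
        · simp only [hd2, show S p + (S q - S p) = S q by ring]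
          rw [hpq.1, hpq.2]; exact onEdge_rep q
        · intro s hs t ht
          rw [hd2] at hs ht
          simp only
          rw [dist_onEdge (A p) (B p) (by linarith [hs.1]) (by linarith [hs.2])
            (by linarith [ht.1]) (by linarith [ht.2])]
          rw [show (S p + s) - (S p + t) = s - t by ring]
      · have hd2 : dist p q = S p - S q := by
          rw [hd, abs_of_nonneg (by linarith)]
        refine ⟨fun u => onEdge (A p) (B p) (S p - u), ?_, ?_, ?_⟩
        · simp only [sub_zero]; exact onEdge_rep p
        · simp only [hd2, show S p - (S p - S q) = S q by ring]
          rw [hpq.1, hpq.2]; exact onEdge_rep q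
        · intro s hs t ht
          rw [hd2] at hs ht
          simp only
          rw [dist_onEdge (A p) (B p) (by linarith [hs.2]) (by linarith [hs.1])
            (by linarith [ht.2]) (by linarith [ht.1])]
          rw [show (S p - s) - (S p - t) = -(s - t) by ring, abs_neg]
  · have hd : dist p q = R p q := d_of_ne hpq
    have hRq : R p q = min (del p (A q) + S q) (del p (B q) + (L q - S q)) := rfl
    have hSl' := S_le q; have hS0' := S_nonneg q
    have hLq : L q = dist (A q) (B q) := rfl
    rcases min_cases (del p (A q) + S q) (del p (B q) + (L q - S q)) with ⟨he, _⟩ | ⟨he, _⟩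
    · have hd2 : dist p q = dist p (Sum.inl (A q)) + S q := by
        rw [hd, hRq, he, dist_inl]
      obtain ⟨γ1, h10, h1E, h1g⟩ := geod_to_vertex p (A q)
      have h3g : Geod (fun u => onEdge (A q) (B q) u) (S q) := by
        intro s hs t ht
        exact dist_onEdge _ _ hs.1 (by linarith [hs.2]) ht.1 (by linarith [ht.2])
      have hm : γ1 (dist p (Sum.inl (A q))) = (fun u => onEdge (A q) (B q) u) 0 := by
        rw [h1E]; exact (onEdge_of_nonpos le_rfl).symm
      have hsum : dist (γ1 0) ((fun u => onEdge (A q) (B q) u) (S q))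
          = dist p (Sum.inl (A q)) + S q := by
        rw [h10]
        show dist p (onEdge (A q) (B q) (S q)) = _
        rw [onEdge_rep q]
        exact hd2
      obtain ⟨γ, hγ0, hγE, hγg⟩ := glue (γ1 := γ1) (γ2 := fun u => onEdge (A q) (B q) u)
        (d1 := dist p (Sum.inl (A q))) (d2 := S q)
        dist_nonneg hS0' hm hsum h1g h3g
      refine ⟨γ, ?_, ?_, ?_⟩
      · rw [hγ0]; exact h10
      · rw [hd2, hγE]
        exact onEdge_rep q
      · rw [hd2]; exact hγg
    · have hd2 : dist p q = dist p (Sum.inl (B q)) + (L q - S q) := by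
        rw [hd, hRq, he, dist_inl]
      obtain ⟨γ1, h10, h1E, h1g⟩ := geod_to_vertex p (B q)
      have h3g : Geod (fun u => onEdge (A q) (B q) (L q - u)) (L q - S q) := by
        intro s hs t ht
        simp only
        rw [dist_onEdge (A q) (B q) (by linarith [hs.2]) (by linarith [hs.1])
          (by linarith [ht.2]) (by linarith [ht.1])]
        rw [show (L q - s) - (L q - t) = -(s - t) by ring, abs_neg]
      have hm : γ1 (dist p (Sum.inl (B q))) = (fun u => onEdge (A q) (B q) (L q - u)) 0 := by
        rw [h1E]
        show _ = onEdge (A q) (B q) (L q - 0)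
        rw [sub_zero]
        exact (onEdge_of_ge le_rfl).symm
      have hsum : dist (γ1 0) ((fun u => onEdge (A q) (B q) (L q - u)) (L q - S q))
          = dist p (Sum.inl (B q)) + (L q - S q) := by
        rw [h10]
        show dist p (onEdge (A q) (B q) (L q - (L q - S q))) = _
        rw [show L q - (L q - S q) = S q by ring, onEdge_rep q]
        exact hd2
      obtain ⟨γ, hγ0, hγE, hγg⟩ := glue (γ1 := γ1)
        (γ2 := fun u => onEdge (A q) (B q) (L q - u))
        (d1 := dist p (Sum.inl (B q))) (d2 := L q - S q)
        dist_nonneg (by linarith) hm hsum h1g h3g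
      refine ⟨γ, ?_, ?_, ?_⟩
      · rw [hγ0]; exact h10
      · rw [hd2, hγE]
        show onEdge (A q) (B q) (L q - (L q - S q)) = q
        rw [show L q - (L q - S q) = S q by ring]
        exact onEdge_rep q
      · rw [hd2]; exact hγg

lemma onEdge_interior {a b : Y} (hab : WellOrderingRel a b) {s : ℝ} (h0 : 0 < s)
    (hL : s < dist a b) :
    A (onEdge a b s) = a ∧ B (onEdge a b s) = b ∧ S (onEdge a b s) = s := by
  unfold onEdge
  rw [dif_neg (not_le.mpr h0), dif_neg (not_le.mpr hL), dif_pos hab]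
  exact ⟨rfl, rfl, rfl⟩

lemma dist_same_edge {x y : X Y} (h : SameEdge x y) : dist x y = |S x - S y| := d_of_same h

lemma dist_deep {x y : X Y} (h : ¬ SameEdge x y) :
    min (S x) (L x - S x) + min (S y) (L y - S y) ≤ dist x y := by
  rw [dist_def, d_of_ne h]
  have h1 := min_le_del x (A y)
  have h2 := min_le_del x (B y)
  have h3 : min (S y) (L y - S y) ≤ S y := min_le_left _ _
  have h4 : min (S y) (L y - S y) ≤ L y - S y := min_le_right _ _
  exact le_min (by linarith) (by linarith)

noncomputable def NSet (r : ℝ) (U : Set Y) : Set (X Y) :=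
  {x | ∃ u ∈ U, dist x (Sum.inl u) ≤ 2*r+2}

noncomputable def JSet (r : ℝ) (a b : Y) (k : ℕ) : Set (X Y) :=
  (fun s => onEdge a b s) ''
    Set.Icc ((2*r+2) + (k:ℝ)*(r+1)) (min ((2*r+2) + ((k:ℝ)+1)*(r+1)) (dist a b - (2*r+2)))

def Near (r : ℝ) (a b : Y) (k : ℕ) (U : Set Y) : Prop :=
  ∃ j ∈ JSet r a b k, ∃ y ∈ NSet r U, dist j y ≤ r

noncomputable def Util (r : ℝ) (i : ℕ) (U : Set Y) : Set (X Y) :=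
  NSet r U ∪ ⋃ (a : Y) (b : Y) (k : ℕ)
    (_ : WellOrderingRel a b ∧ k % 2 = i ∧ Near r a b k U), JSet r a b k

noncomputable def VFam (r : ℝ) (𝒰i : Set (Set Y)) (i : ℕ) : Set (Set (X Y)) :=
  {W | ∃ U ∈ 𝒰i, W = Util r i U} ∪
    {W | ∃ a b k, (WellOrderingRel a b ∧ k % 2 = i ∧ ∀ U ∈ 𝒰i, ¬ Near r a b k U) ∧
      W = JSet r a b k}

lemma mem_util_iff {r : ℝ} {i : ℕ} {U : Set Y} {x : X Y} :
    x ∈ Util r i U ↔ x ∈ NSet r U ∨ ∃ a b k,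
      (WellOrderingRel a b ∧ k % 2 = i ∧ Near r a b k U) ∧ x ∈ JSet r a b k := by
  simp only [Util, Set.mem_union, Set.mem_iUnion]
  tauto

lemma mem_vfam_iff {r : ℝ} {𝒰i : Set (Set Y)} {i : ℕ} {W : Set (X Y)} :
    W ∈ VFam r 𝒰i i ↔ (∃ U ∈ 𝒰i, W = Util r i U) ∨
      ∃ a b k, (WellOrderingRel a b ∧ k % 2 = i ∧ ∀ U ∈ 𝒰i, ¬ Near r a b k U) ∧
        W = JSet r a b k := by
  simp [VFam, Set.mem_union, Set.mem_setOf_eq]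

lemma JSet_spec {r : ℝ} (hr : 0 < r) {a b : Y} (hab : WellOrderingRel a b) {k : ℕ} {x : X Y}
    (hx : x ∈ JSet r a b k) :
    A x = a ∧ B x = b ∧ (2*r+2) + (k:ℝ)*(r+1) ≤ S x ∧
      S x ≤ (2*r+2) + ((k:ℝ)+1)*(r+1) ∧ S x ≤ dist a b - (2*r+2) := by
  obtain ⟨s, hs, rfl⟩ := hx
  have hk0 : (0:ℝ) ≤ (k:ℝ)*(r+1) := by positivity
  have h1 := hs.1
  have h2 : s ≤ (2*r+2) + ((k:ℝ)+1)*(r+1) := le_trans hs.2 (min_le_left _ _)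
  have h3 : s ≤ dist a b - (2*r+2) := le_trans hs.2 (min_le_right _ _)
  have h0 : 0 < s := by linarith
  have hsd : s < dist a b := by linarith
  have hint := onEdge_interior hab h0 hsd
  simp only [show (fun s => onEdge a b s) s = onEdge a b s from rfl]
  rw [hint.1, hint.2.1, hint.2.2]
  exact ⟨rfl, rfl, h1, h2, h3⟩

lemma JSet_diam {r : ℝ} (hr : 0 < r) {a b : Y} {k : ℕ} {x y : X Y}
    (hx : x ∈ JSet r a b k) (hy : y ∈ JSet r a b k) : dist x y ≤ r + 1 := by
  obtain ⟨s, hs, rfl⟩ := hx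
  obtain ⟨t, ht, rfl⟩ := hy
  have hk0 : (0:ℝ) ≤ (k:ℝ)*(r+1) := by positivity
  have hs2 := le_trans hs.2 (min_le_left _ _)
  have hs3 := le_trans hs.2 (min_le_right _ _)
  have ht2 := le_trans ht.2 (min_le_left _ _)
  have ht3 := le_trans ht.2 (min_le_right _ _)
  have h1 := hs.1; have h2 := ht.1
  rw [dist_onEdge a b (by linarith) (by linarith) (by linarith) (by linarith)]
  rw [abs_sub_le_iff]
  constructor <;> nlinarith

lemma JSet_sep {r : ℝ} (hr : 0 < r) {a b a' b' : Y} (hab : WellOrderingRel a b)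
    (hab' : WellOrderingRel a' b') {k k' : ℕ} (hpar : k % 2 = k' % 2)
    (hne : (a, b, k) ≠ (a', b', k')) {x y : X Y}
    (hx : x ∈ JSet r a b k) (hy : y ∈ JSet r a' b' k') : r < dist x y := by
  obtain ⟨hAx, hBx, hx1, hx2, hx3⟩ := JSet_spec hr hab hx
  obtain ⟨hAy, hBy, hy1, hy2, hy3⟩ := JSet_spec hr hab' hy
  by_cases he : a = a' ∧ b = b'
  · obtain ⟨rfl, rfl⟩ := he
    have hkk : k ≠ k' := by
      intro h; exact hne (by rw [h])
    have hsame : SameEdge x y := ⟨hAx.trans hAy.symm, hBx.trans hBy.symm⟩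
    rw [dist_same_edge hsame]
    rcases lt_or_gt_of_ne hkk with hlt | hlt
    · have hk2 : k + 2 ≤ k' := by omega
      have hk2' : (k:ℝ) + 2 ≤ (k':ℝ) := by exact_mod_cast hk2
      have : r + 1 ≤ S y - S x := by nlinarith
      calc r < r + 1 := by linarith
        _ ≤ -(S x - S y) := by linarith
        _ ≤ |S x - S y| := neg_le_abs _
    · have hk2 : k' + 2 ≤ k := by omega
      have hk2' : (k':ℝ) + 2 ≤ (k:ℝ) := by exact_mod_cast hk2
      have : r + 1 ≤ S x - S y := by nlinarith
      calc r < r + 1 := by linarith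
        _ ≤ S x - S y := this
        _ ≤ |S x - S y| := le_abs_self _
  · have hnsame : ¬ SameEdge x y := by
      intro hs
      exact he ⟨by rw [← hAx, hs.1, hAy], by rw [← hBx, hs.2, hBy]⟩
    have hdd := dist_deep hnsame
    have hLx : L x = dist a b := by rw [L, hAx, hBx]
    have hLy : L y = dist a' b' := by rw [L, hAy, hBy]
    have hkx : (0:ℝ) ≤ (k:ℝ)*(r+1) := by positivity
    have hky : (0:ℝ) ≤ (k':ℝ)*(r+1) := by positivity
    have hminx : (2*r+2) ≤ min (S x) (L x - S x) := le_min (by linarith) (by rw [hLx]; linarith)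
    have hminy : (2*r+2) ≤ min (S y) (L y - S y) := le_min (by linarith) (by rw [hLy]; linarith)
    linarith

lemma Util_dist {r : ℝ} (hr : 0 < r) {i : ℕ} {U : Set Y} {x : X Y} (hx : x ∈ Util r i U) :
    ∃ u ∈ U, dist x (Sum.inl u) ≤ 4*r+3 := by
  rcases mem_util_iff.mp hx with hN | ⟨a, b, k, ⟨hab, hpar, hnear⟩, hxJ⟩
  · obtain ⟨u, huU, hxu⟩ := hN
    exact ⟨u, huU, by linarith⟩
  · obtain ⟨j, hj, y, hyN, hjy⟩ := hnear
    obtain ⟨u, huU, hyu⟩ := hyN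
    refine ⟨u, huU, ?_⟩
    have t4 := dist_triangle4 x j y (Sum.inl u)
    have hdj : dist x j ≤ r + 1 := JSet_diam hr hxJ hj
    linarith

lemma asdim_le_X (n : ℕ) (hn : 1 ≤ n) (hle : AsdimLE n Y) : AsdimLE n (X Y) := by
  intro r hr
  obtain ⟨𝒰, D, hcov, hdisj, hdiam⟩ := hle (9*r+7) (by linarith)
  refine ⟨fun i => VFam r (𝒰 i) i.val, max (2*(4*r+3) + D) (r+1), ?_, ?_, ?_⟩
  · -- cover
    intro x
    by_cases h1 : S x ≤ 2*r+2
    · obtain ⟨i, U, hU, hmem⟩ := hcov (A x)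
      refine ⟨i, Util r i.val U, mem_vfam_iff.mpr (Or.inl ⟨U, hU, rfl⟩), ?_⟩
      exact mem_util_iff.mpr (Or.inl ⟨A x, hmem, by rw [dist_to_A]; exact h1⟩)
    · by_cases h2 : L x - S x ≤ 2*r+2
      · obtain ⟨i, U, hU, hmem⟩ := hcov (B x)
        refine ⟨i, Util r i.val U, mem_vfam_iff.mpr (Or.inl ⟨U, hU, rfl⟩), ?_⟩
        exact mem_util_iff.mpr (Or.inl ⟨B x, hmem, by rw [dist_to_B]; exact h2⟩)
      · push_neg at h1 h2
        cases x with
        | inl y => simp at h1; linarith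
        | inr e =>
          set x : X Y := Sum.inr e with hxdef
          have hab : WellOrderingRel (A x) (B x) := e.2.1
          set s : ℝ := S x with hsdef
          set k : ℕ := Nat.floor ((s - (2*r+2))/(r+1)) with hkdef
          have hl0 : (0:ℝ) < r + 1 := by linarith
          have hs0 : 0 ≤ (s - (2*r+2))/(r+1) := by
            apply div_nonneg _ (le_of_lt hl0); linarith
          have hk1 : (k:ℝ) ≤ (s - (2*r+2))/(r+1) := Nat.floor_le hs0
          have hk1' : (2*r+2) + (k:ℝ)*(r+1) ≤ s := by
            have := (le_div_iff₀ hl0).mp hk1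
            linarith
          have hk2 : (s - (2*r+2))/(r+1) < (k:ℝ) + 1 := Nat.lt_floor_add_one _
          have hk2' : s ≤ (2*r+2) + ((k:ℝ)+1)*(r+1) := by
            have := (div_lt_iff₀ hl0).mp hk2
            nlinarith
          have hxJ : x ∈ JSet r (A x) (B x) k := by
            refine ⟨s, ⟨hk1', le_min hk2' ?_⟩, onEdge_rep x⟩
            have : L x = dist (A x) (B x) := rfl
            linarith
          have hklt : k % 2 < n + 1 := by
            have := Nat.mod_lt k (show 0 < 2 by norm_num)
            omega
          by_cases hk : ∃ U ∈ 𝒰 ⟨k % 2, hklt⟩, Near r (A x) (B x) k U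
          · obtain ⟨U, hU, hnear⟩ := hk
            refine ⟨⟨k % 2, hklt⟩, Util r (k % 2) U,
              mem_vfam_iff.mpr (Or.inl ⟨U, hU, rfl⟩), ?_⟩
            exact mem_util_iff.mpr (Or.inr ⟨A x, B x, k, ⟨hab, rfl, hnear⟩, hxJ⟩)
          · push_neg at hk
            exact ⟨⟨k % 2, hklt⟩, JSet r (A x) (B x) k,
              mem_vfam_iff.mpr (Or.inr ⟨A x, B x, k, ⟨hab, rfl, hk⟩, rfl⟩), hxJ⟩
  · -- disjoint
    intro i
    have mixed : ∀ U ∈ 𝒰 i, ∀ a' b' : Y, ∀ k' : ℕ,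
        (WellOrderingRel a' b' ∧ k' % 2 = i.val ∧ ∀ U' ∈ 𝒰 i, ¬ Near r a' b' k' U') →
        ∀ x ∈ Util r i.val U, ∀ y ∈ JSet r a' b' k', r < dist x y := by
      intro U hU a' b' k' ⟨hab', hpar', hkept'⟩ x hx y hy
      rcases mem_util_iff.mp hx with hN | ⟨a, b, k, ⟨hab, hpar, hnear⟩, hxJ⟩
      · by_contra hcon
        push_neg at hcon
        exact hkept' U hU ⟨y, hy, x, hN, by rw [dist_comm]; exact hcon⟩
      · have hne : (a, b, k) ≠ (a', b', k') := by
          intro h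
          injection h with h1 h2
          injection h2 with h2 h3
          subst h1; subst h2; subst h3
          exact hkept' U hU hnear
        exact JSet_sep hr hab hab' (hpar.trans hpar'.symm) hne hxJ hy
    intro W1 hW1 W2 hW2 hne x hx y hy
    rcases mem_vfam_iff.mp hW1 with ⟨U, hU, rfl⟩ | ⟨a, b, k, hk, rfl⟩ <;>
      rcases mem_vfam_iff.mp hW2 with ⟨U', hU', rfl⟩ | ⟨a', b', k', hk', rfl⟩
    · have hUU : U ≠ U' := fun h => hne (by rw [h])
      obtain ⟨u, huU, hxu⟩ := Util_dist hr hx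
      obtain ⟨u', hu'U, hyu⟩ := Util_dist hr hy
      have h9 : 9*r+7 < dist u u' := hdisj i U hU U' hU' hUU u huU u' hu'U
      have t4 := dist_triangle4 (α := X Y) (Sum.inl u : X Y) x y (Sum.inl u')
      rw [dist_inl_inl] at t4
      rw [dist_comm (α := X Y) (Sum.inl u : X Y) x] at t4
      linarith
    · exact mixed U hU a' b' k' hk' x hx y hy
    · rw [dist_comm]
      exact mixed U' hU' a b k hk y hy x hx
    · have hne2 : (a, b, k) ≠ (a', b', k') := by
        intro h
        injection h with h1 h2
        injection h2 with h2 h3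
        subst h1; subst h2; subst h3
        exact hne rfl
      exact JSet_sep hr hk.1 hk'.1 (hk.2.1.trans hk'.2.1.symm) hne2 hx hy
  · -- diameter
    intro i W hW x hx y hy
    rcases mem_vfam_iff.mp hW with ⟨U, hU, rfl⟩ | ⟨a, b, k, hk, rfl⟩
    · obtain ⟨u, huU, hxu⟩ := Util_dist hr hx
      obtain ⟨u', hu'U, hyu⟩ := Util_dist hr hy
      have hD : dist u u' ≤ D := hdiam i U hU u huU u' hu'U
      have t4 := dist_triangle4 (α := X Y) x (Sum.inl u : X Y) (Sum.inl u') y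
      rw [dist_inl_inl] at t4
      rw [dist_comm (α := X Y) (Sum.inl u' : X Y) y] at t4
      have : dist x y ≤ 2*(4*r+3) + D := by linarith
      exact le_trans this (le_max_left _ _)
    · exact le_trans (JSet_diam hr hx hy) (le_max_right _ _)

lemma pullback {Z : Type*} [MetricSpace Z] (f : Y → Z)
    (hf : ∀ y y', dist (f y) (f y') = dist y y') (m : ℕ) (h : AsdimLE m Z) : AsdimLE m Y := by
  intro r hr
  obtain ⟨𝒰, D, hc, hd, hD⟩ := h r hr
  refine ⟨fun i => (fun U => f ⁻¹' U) '' 𝒰 i, D, ?_, ?_, ?_⟩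
  · intro y
    obtain ⟨i, U, hU, hy⟩ := hc (f y)
    exact ⟨i, f ⁻¹' U, ⟨U, hU, rfl⟩, hy⟩
  · intro i V1 hV1 V2 hV2 hne x hx y hy
    obtain ⟨U1, hU1, rfl⟩ := hV1
    obtain ⟨U2, hU2, rfl⟩ := hV2
    have hU12 : U1 ≠ U2 := fun h => hne (by rw [h])
    have := hd i U1 hU1 U2 hU2 hU12 (f x) hx (f y) hy
    rw [hf] at this
    exact this
  · intro i W hW x hx y hy
    obtain ⟨U, hU, rfl⟩ := hW
    have := hD i U hU (f x) hx (f y) hy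
    rw [hf] at this
    exact this

end MGaux

/-- Every 1-discrete metric space `Y` with `asdim Y = n ≥ 1` embeds isometrically into a
geodesic metric space `X` with `asdim X = n`. -/
theorem discrete_embeds_in_geodesic {Y : Type u} [MetricSpace Y] (n : ℕ) (hn : 1 ≤ n)
    (hdisc : ∀ y y' : Y, y ≠ y' → 1 ≤ dist y y')
    (hle : AsdimLE n Y) (hnle : ¬ AsdimLE (n - 1) Y) :
    ∃ (X : Type u) (_ : MetricSpace X), IsGeodesicSpace X ∧
      AsdimLE n X ∧ ¬ AsdimLE (n - 1) X ∧
      ∃ f : Y → X, ∀ y y' : Y, dist (f y) (f y') = dist y y' := by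
  refine ⟨MGaux.X Y, inferInstance, MGaux.isGeodesic, MGaux.asdim_le_X n hn hle,
    fun h => hnle (MGaux.pullback Sum.inl MGaux.dist_inl_inl (n-1) h),
    Sum.inl, MGaux.dist_inl_inl⟩
end
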